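/- arXiv:1407.8125 — 8 statements merged into one kernel-verified Lean document; each statement's English description precedes it below -/
import Mathlib

section
/- Let F be a field, γ ∈ F, f ∈ F[X] a monic polynomial of degree d ≥ 1, and n ≥ r ≥ 1 integers. Define S(γ,f,n,r) ∈ M_{dn×dr}(F) by: the (i,j) entry is the coefficient of X^{i−1} in (X+γ)^{j−1} f(X)^{n−r}, for 1 ≤ i ≤ dn, 1 ≤ j ≤ dr. Then S(−γ,f,n,r)·(C_{f(X+γ)^r} + γI) = C_{f(X)^n}·S(−γ,f,n,r), where C_g denotes the companion matrix of a monic polynomial g. -/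
/-!
Column `j` of `S(-γ, f, n, r)` is the coefficient vector of `(X - γ) ^ j * f ^ (n - r)`.
Left multiplication by `C_{f^n}` acts on such a vector as multiplication by `X` followed by
reduction modulo `f ^ n`. Right multiplication by `C_g + γ I`, with `g = f(X + γ) ^ r`, sends
column `j` to column `j + 1` plus `γ` times column `j`, i.e. to the coefficients of
`X (X - γ) ^ j f ^ (n - r)`; in the last column the companion part instead produces
`-(g(X - γ) - (X - γ) ^ {dr}) f ^ (n - r)`, and `g(X - γ) f ^ (n - r) = f ^ n` is precisely the
reduction term on the other side.
-/

open Polynomial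

/-- The companion matrix of a monic polynomial `g`, of size `n` (intended to be used with
`n = g.natDegree`): it has `1`'s on the subdiagonal, last column `(-g₀, …, -g_{n-1})ᵀ`
and `0`'s elsewhere. -/
def companionOf {F : Type*} [Field F] (g : Polynomial F) (n : ℕ) :
    Matrix (Fin n) (Fin n) F :=
  fun i j => if (j : ℕ) = n - 1 then -g.coeff i else if (i : ℕ) = (j : ℕ) + 1 then 1 else 0

/-- The matrix `S(γ, f, n, r) ∈ M_{dn × dr}(F)`, whose `(i,j)` entry is the coefficient
of `X^(i-1)` in `(X + γ)^(j-1) · f(X)^(n-r)` (here rows and columns are indexed from `0`). -/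
noncomputable def Smat {F : Type*} [Field F] (γ : F) (f : Polynomial F) (d n r : ℕ) :
    Matrix (Fin (d * n)) (Fin (d * r)) F :=
  fun i j => ((X + C γ) ^ (j : ℕ) * f ^ (n - r)).coeff i

section Companion

variable {F : Type*} [Field F]

theorem sum_companionOf_mul_coeff (g p : F[X]) {N : ℕ} (i : Fin N) :
    ∑ k : Fin N, companionOf g N i k * p.coeff k =
      (X * p).coeff i - g.coeff i * p.coeff (N - 1) := by
  have hN : 0 < N := i.pos
  let last : Fin N := ⟨N - 1, by omega⟩
  obtain ⟨i, hi⟩ := i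
  cases i with
  | zero =>
    rw [Fintype.sum_eq_single last (fun k hk => by
      simp_all [companionOf, Fin.ext_iff, last])]
    simp [companionOf, last]
  | succ t =>
    let prev : Fin N := ⟨t, by omega⟩
    have hne : last ≠ prev := by simp [last, prev, Fin.ext_iff]; omega
    rw [Fintype.sum_eq_add last prev hne (fun k ⟨hk₁, hk₂⟩ => by
      simp_all [companionOf, Fin.ext_iff, last, prev]; omega)]
    simp [companionOf, last, prev, coeff_X_mul, show t ≠ N - 1 by omega]
    ring

theorem sum_mul_companionOf {g : F[X]} {N : ℕ} (hg : g.Monic) (hgN : g.natDegree = N)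
    (u : ℕ → F) (j : Fin N) :
    ∑ k : Fin N, u k * companionOf g N k j =
      u (j + 1) - if (j : ℕ) = N - 1 then ∑ k ∈ Finset.range (N + 1), g.coeff k * u k else 0 := by
  by_cases hj : (j : ℕ) = N - 1
  · simp only [companionOf, hj, if_true, mul_neg, Finset.sum_neg_distrib]
    rw [Finset.sum_range_succ, ← hgN, hg.coeff_natDegree, hgN, Nat.sub_add_cancel (by omega),
      ← Fin.sum_univ_eq_sum_range (fun k => g.coeff k * u k)]
    simp only [mul_comm (u _)]
    ring
  · let next : Fin N := ⟨j + 1, by omega⟩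
    rw [Fintype.sum_eq_single next (fun k hk => by
      simp_all [companionOf, Fin.ext_iff, next])]
    simp [companionOf, hj, next]

end Companion

theorem Polynomial.Monic.coeff_eq_ite_of_natDegree_le {R : Type*} [Semiring R] {p : R[X]}
    (hp : p.Monic) {m : ℕ} (hm : p.natDegree ≤ m) :
    p.coeff m = if p.natDegree = m then 1 else 0 := by
  split_ifs with h
  · exact h ▸ hp.coeff_natDegree
  · exact coeff_eq_zero_of_natDegree_lt (lt_of_le_of_ne hm h)

theorem Polynomial.Monic.coeff_X_add_C_pow_mul {R : Type*} [Semiring R] [Nontrivial R]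
    {q : R[X]} (hq : q.Monic) (c : R) {j m : ℕ} (hm : j + q.natDegree ≤ m) :
    ((X + C c) ^ j * q).coeff m = if j + q.natDegree = m then 1 else 0 := by
  have hdeg : ((X + C c) ^ j * q).natDegree = j + q.natDegree := by
    rw [((monic_X_add_C c).pow j).natDegree_mul hq, (monic_X_add_C c).natDegree_pow,
      natDegree_X_add_C, mul_one]
  rw [((monic_X_add_C c).pow j).mul hq |>.coeff_eq_ite_of_natDegree_le (hdeg ▸ hm), hdeg]

theorem Polynomial.coeff_comp_mul {R : Type*} [CommSemiring R] (g w q : R[X]) (i : ℕ) :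
    (g.comp w * q).coeff i =
      ∑ k ∈ Finset.range (g.natDegree + 1), g.coeff k * (w ^ k * q).coeff i := by
  rw [comp, eval₂_eq_sum_range, Finset.sum_mul, finsetSum_coeff]
  simp only [mul_assoc, coeff_C_mul]

theorem smat_companion_relation_general
    {F : Type*} [Field F] (γ : F) (f : Polynomial F) (d n r : ℕ)
    (hf : f.Monic) (hdeg : f.natDegree = d) (hnr : r ≤ n) :
    Smat (-γ) f d n r *
        (companionOf ((f.comp (X + C γ)) ^ r) (d * r) +
          γ • (1 : Matrix (Fin (d * r)) (Fin (d * r)) F)) =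
      companionOf (f ^ n) (d * n) * Smat (-γ) f d n r := by
  ext i j
  rw [Matrix.mul_add, Matrix.add_apply, Matrix.mul_smul, Matrix.mul_one, Matrix.smul_apply,
    Matrix.mul_apply, Matrix.mul_apply]
  simp only [Smat]
  set w : F[X] := X + C (-γ)
  set q : F[X] := f ^ (n - r)
  set g : F[X] := (f.comp (X + C γ)) ^ r
  have hg : g.Monic := (hf.comp_X_add_C γ).pow r
  have hgdeg : g.natDegree = d * r := by
    rw [natDegree_pow, natDegree_comp, natDegree_X_add_C, hdeg]; ring
  -- `g (X - γ) = f ^ r`, so the last column overflows by exactly `f ^ r * q = f ^ n`.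
  have hlast :
      ∑ k ∈ Finset.range (d * r + 1), g.coeff k * (w ^ k * q).coeff i = (f ^ n).coeff i := by
    have hXw : (X + C γ : F[X]).comp w = X := by simp [w]
    rw [← hgdeg, ← coeff_comp_mul, pow_comp, comp_assoc, hXw, comp_X, ← pow_add,
      Nat.add_sub_cancel' hnr]
  have htop : (w ^ (j : ℕ) * q).coeff (d * n - 1) = if (j : ℕ) = d * r - 1 then 1 else 0 := by
    have hqdeg : q.natDegree = d * n - d * r := by
      rw [natDegree_pow, hdeg, ← Nat.mul_sub, mul_comm]
    have := j.2
    have := Nat.mul_le_mul_left d hnr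
    rw [(hf.pow _).coeff_X_add_C_pow_mul _ (by rw [hqdeg]; omega), hqdeg]
    exact if_congr (by omega) rfl rfl
  have hX : X * (w ^ (j : ℕ) * q) = w ^ ((j : ℕ) + 1) * q + γ • (w ^ (j : ℕ) * q) := by
    rw [pow_succ, smul_eq_C_mul]; simp only [w, map_neg]; ring
  rw [sum_mul_companionOf hg hgdeg (fun k => (w ^ k * q).coeff i), sum_companionOf_mul_coeff,
    htop, hlast, hX, coeff_add, coeff_smul]
  split_ifs <;> ring

/-- Let `F` be a field, `γ ∈ F`, `f ∈ F[X]` monic of degree `d ≥ 1` and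
`n ≥ r ≥ 1`.  Then `S(−γ,f,n,r) · (C_{f(X+γ)^r} + γ·I) = C_{f(X)^n} · S(−γ,f,n,r)`,
where `C_g` denotes the companion matrix of a monic polynomial `g`. -/
theorem smat_companion_relation
    {F : Type*} [Field F] (γ : F) (f : Polynomial F) (d n r : ℕ)
    (hf : f.Monic) (hdeg : f.natDegree = d) (hd : 1 ≤ d) (hr : 1 ≤ r) (hnr : r ≤ n) :
    Smat (-γ) f d n r *
        (companionOf ((f.comp (X + C γ)) ^ r) (d * r) +
          γ • (1 : Matrix (Fin (d * r)) (Fin (d * r)) F)) =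
      companionOf (f ^ n) (d * n) * Smat (-γ) f d n r :=
  smat_companion_relation_general γ f d n r hf hdeg hnr
end

section
/- Let 1 ≤ j < m. The F-linear map F[X] → End_F(U) given by g(X) ↦ T^j ∘ g(E) is, onto its image T^j𝓔, a surjection with kernel exactly the ideal (p₁^{s_{j+1}}); in particular dim_F T^j𝓔 = d·s_{j+1}. Moreover T^m = 0. -/
open Polynomial

/-- The shifted polynomial `p_{i+1}(X) = p₁(X + i)`: we use 0-based indexing for the
paper's `p_i(X) = p₁(X + (i−1))`, `1 ≤ i ≤ m`. -/
noncomputable def pShift {F : Type*} [Field F] (q : Polynomial F) (i : ℕ) : Polynomial F :=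
  q.comp (X + C (i : F))

/-- The `F[X]`-module `U = U₁ ⊕ ⋯ ⊕ U_m`, where `U_{i+1} = F[X]·u_{i+1} ≅
F[X]/(p_{i+1}^{s_{i+1}})` (0-based indexing). -/
def Uspace (F : Type*) [Field F] (q : Polynomial F) (m : ℕ) (s : Fin m → ℕ) : Type _ :=
  (i : Fin m) → Polynomial F ⧸ Ideal.span {(pShift q i) ^ (s i)}

noncomputable instance {F : Type*} [Field F] (q : Polynomial F) (m : ℕ) (s : Fin m → ℕ) :
    AddCommGroup (Uspace F q m s) :=
  inferInstanceAs (AddCommGroup ((i : Fin m) → Polynomial F ⧸ Ideal.span {(pShift q i) ^ (s i)}))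

noncomputable instance {F : Type*} [Field F] (q : Polynomial F) (m : ℕ) (s : Fin m → ℕ) :
    Module F (Uspace F q m s) :=
  inferInstanceAs (Module F ((i : Fin m) → Polynomial F ⧸ Ideal.span {(pShift q i) ^ (s i)}))

/-- The operator `A ∈ End_F(U)`: multiplication by `X`. -/
noncomputable def Aop (F : Type*) [Field F] (q : Polynomial F) (m : ℕ) (s : Fin m → ℕ) :
    Module.End F (Uspace F q m s) :=
  LinearMap.pi fun i =>
    (LinearMap.mulLeft F (Ideal.Quotient.mk (Ideal.span {(pShift q i) ^ (s i)}) X)).comp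
      (LinearMap.proj i)

/-- The operator `E ∈ End_F(U)`: the `F[X]`-linear map with `E u_i = (X + (i−1)) u_i`
(0-based: on the `i`-th component it is multiplication by `X + i`). -/
noncomputable def Eop (F : Type*) [Field F] (q : Polynomial F) (m : ℕ) (s : Fin m → ℕ) :
    Module.End F (Uspace F q m s) :=
  LinearMap.pi fun i =>
    (LinearMap.mulLeft F
        (Ideal.Quotient.mk (Ideal.span {(pShift q i) ^ (s i)}) (X + C (i : F)))).comp
      (LinearMap.proj i)

/-- Componentwise multiplication by the polynomial `g` on `U` (the action `u ↦ g(X)·u`). -/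
noncomputable def polySmul {F : Type*} [Field F] {q : Polynomial F} {m : ℕ} {s : Fin m → ℕ}
    (g : Polynomial F) (u : Uspace F q m s) : Uspace F q m s :=
  fun i => Ideal.Quotient.mk (Ideal.span {(pShift q i) ^ (s i)}) g * u i

/-- The canonical generator `u_{i+1}` of the summand `U_{i+1}` (0-based). -/
noncomputable def uGen (F : Type*) [Field F] (q : Polynomial F) (m : ℕ) (s : Fin m → ℕ)
    (i : Fin m) : Uspace F q m s :=
  Pi.single i 1

/-- The standing assumptions on the data: `p₁ = q` is monic irreducible of degree `d`,
`m > 1`, and `s₁ ≥ s₂ ≥ ⋯ ≥ s_m ≥ 1`. -/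
structure GoodData (F : Type*) [Field F] (q : Polynomial F) (d m : ℕ) (s : Fin m → ℕ) :
    Prop where
  monic : q.Monic
  irr : Irreducible q
  deg : q.natDegree = d
  hm : 1 < m
  dec : ∀ i j : Fin m, i ≤ j → s j ≤ s i
  pos : ∀ i, 1 ≤ s i

/-- `T` is the operator of the paper: the unique `F`-linear endomorphism of `U` with
`T u₁ = 0`, `T u_i = p_{i−1}(X)^{s_{i−1}−s_i} u_{i−1}` for `2 ≤ i ≤ m`, and
`T(g(X+1)·u) = g(X)·(T u)` for all `g ∈ F[X]`, `u ∈ U`. -/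
def IsTmap {F : Type*} [Field F] (q : Polynomial F) (m : ℕ) (s : Fin m → ℕ)
    (T : Module.End F (Uspace F q m s)) : Prop :=
  (∀ h0 : 0 < m, T (uGen F q m s ⟨0, h0⟩) = 0) ∧
  (∀ (i : ℕ) (hi : i + 1 < m),
      T (uGen F q m s ⟨i + 1, hi⟩) =
        polySmul ((pShift q i) ^ (s ⟨i, by omega⟩ - s ⟨i + 1, hi⟩))
          (uGen F q m s ⟨i, by omega⟩)) ∧
  (∀ (g : Polynomial F) (u : Uspace F q m s),
      T (polySmul (g.comp (X + C 1)) u) = polySmul g (T u))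

/-- The linear map `F[X] → End_F(U)`, `g ↦ T^j ∘ g(E)`, whose image is the subspace
`T^j·𝓔` of `End_F(U)`. -/
noncomputable def psiMap {F : Type*} [Field F] (q : Polynomial F) (m : ℕ) (s : Fin m → ℕ)
    (T : Module.End F (Uspace F q m s)) (j : ℕ) :
    Polynomial F →ₗ[F] Module.End F (Uspace F q m s) :=
  (LinearMap.mulLeft F (T ^ j)).comp (Polynomial.aeval (Eop F q m s)).toLinearMap

/-! On the summands, `g(E)` multiplies `h(X)·u_{i+1}` by `g(X+i)`, and the defining properties of
`T` give `T^j (h(X)·u_{i+j+1}) = h(X-j) p_{i+1}^{s_{i+1}-s_{i+j+1}}·u_{i+1}`, while `T^j` kills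
`u_1, …, u_j`. Taking `i = 0` and `h = 1`, `T^j g(E) = 0` forces `p₁^{s₁} ∣ g·p₁^{s₁-s_{j+1}}`,
i.e. `p₁^{s_{j+1}} ∣ g`; conversely this divisibility makes `g(X+i)` divisible by
`p_{i+1}^{s_{j+1}}`, which suffices for every `i` since `s_{i+j+1} ≤ s_{j+1}`. The image of
`g ↦ T^j g(E)` is then `F[X]/(p₁^{s_{j+1}})`, of dimension `d·s_{j+1}`. -/

theorem finrank_range_eq_natDegree_of_ker {K V : Type*} [Field K] [AddCommGroup V] [Module K V]
    (φ : K[X] →ₗ[K] V) (p : K[X]) (hker : ∀ g, φ g = 0 ↔ g ∈ Ideal.span {p}) :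
    Module.finrank K (LinearMap.range φ) = p.natDegree := by
  have : LinearMap.ker φ = (Ideal.span {p}).restrictScalars K := Submodule.ext hker
  rw [← φ.quotKerEquivRange.finrank_eq, this,
    (Submodule.Quotient.restrictScalarsEquiv K _).finrank_eq, finrank_quotient_span_eq_natDegree]

theorem comp_X_add_C_taylor_neg {R : Type*} [CommRing R] (r : R) (h : R[X]) :
    (taylor (-r) h).comp (X + C r) = h := by
  rw [← taylor_apply, taylor_taylor, add_neg_cancel, taylor_zero]

section
variable {F : Type*} [Field F] {q : F[X]} {m : ℕ} {s : Fin m → ℕ}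

theorem pShift_eq_taylor (i : ℕ) : pShift q i = taylor (i : F) q := rfl

theorem taylor_neg_pShift (i j : ℕ) : taylor (-(j : F)) (pShift q (i + j)) = pShift q i := by
  rw [pShift_eq_taylor, pShift_eq_taylor, taylor_taylor]
  congr 2
  push_cast
  ring

theorem pShift_zero : pShift q 0 = q := by
  rw [pShift_eq_taylor, Nat.cast_zero, taylor_zero]

theorem polySmul_polySmul (g h : F[X]) (u : Uspace F q m s) :
    polySmul g (polySmul h u) = polySmul (g * h) u :=
  funext fun i => by simp only [polySmul, map_mul, mul_assoc]

theorem polySmul_uGen (h : F[X]) (i : Fin m) :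
    polySmul h (uGen F q m s i) = Pi.single i (Ideal.Quotient.mk _ h) := by
  funext k
  rcases eq_or_ne k i with rfl | hk
  · simp [polySmul, uGen]
  · simp [polySmul, uGen, hk]

theorem polySmul_uGen_eq_zero_iff (h : F[X]) (i : Fin m) :
    polySmul h (uGen F q m s i) = 0 ↔ pShift q i ^ s i ∣ h := by
  rw [polySmul_uGen, ← Ideal.mem_span_singleton, ← Ideal.Quotient.eq_zero_iff_mem]
  exact Pi.single_eq_zero_iff

theorem Uspace.end_ext {f f' : Module.End F (Uspace F q m s)}
    (hf : ∀ i h, f (polySmul h (uGen F q m s i)) = f' (polySmul h (uGen F q m s i))) : f = f' :=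
  LinearMap.pi_ext fun i x => by
    obtain ⟨h, rfl⟩ := Ideal.Quotient.mk_surjective x
    have := hf i h
    rw [polySmul_uGen] at this
    exact this

theorem aeval_Eop_polySmul_uGen (g h : F[X]) (i : Fin m) :
    aeval (Eop F q m s) g (polySmul h (uGen F q m s i)) =
      polySmul (taylor (i : F) g * h) (uGen F q m s i) := by
  -- `E` is multiplication by the element `e` of the product ring `U`, so `g(E)` multiplies by `g(e)`.
  let e : (i : Fin m) → F[X] ⧸ Ideal.span {pShift q i ^ s i} :=
    fun i => Ideal.Quotient.mk _ (X + C (i : F))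
  have hE : aeval (Eop F q m s) g =
      Algebra.lmul F ((i : Fin m) → F[X] ⧸ Ideal.span {pShift q i ^ s i}) (aeval e g) :=
    aeval_algHom_apply (Algebra.lmul F _) e g
  rw [hE, polySmul_uGen, polySmul_uGen]
  change aeval e g * Pi.single i _ = _
  rw [← Pi.single_mul_right, aeval_pi_apply₂, map_mul, taylor_apply, comp_eq_aeval,
    ← Ideal.Quotient.mkₐ_eq_mk F, ← aeval_algHom_apply (Ideal.Quotient.mkₐ F _)]
  rfl

variable {T : Module.End F (Uspace F q m s)}

theorem IsTmap.apply_uGen_zero (hT : IsTmap q m s T) (h0 : 0 < m) (h : F[X]) :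
    T (polySmul h (uGen F q m s ⟨0, h0⟩)) = 0 := by
  rw [← comp_X_add_C_taylor_neg 1 h, hT.2.2, hT.1 h0]
  exact funext fun _ => mul_zero _

theorem IsTmap.apply_uGen_succ (hT : IsTmap q m s T) (i : ℕ) (hi : i + 1 < m) (h : F[X]) :
    T (polySmul h (uGen F q m s ⟨i + 1, hi⟩)) =
      polySmul (taylor (-1) h * pShift q i ^ (s ⟨i, by omega⟩ - s ⟨i + 1, hi⟩))
        (uGen F q m s ⟨i, by omega⟩) := by
  rw [← comp_X_add_C_taylor_neg 1 h, hT.2.2, hT.2.1 i hi, polySmul_polySmul,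
    comp_X_add_C_taylor_neg]

theorem IsTmap.pow_apply_uGen_add (hs : Antitone s) (hT : IsTmap q m s T) (j i : ℕ)
    (hij : i + j < m) (h : F[X]) :
    (T ^ j) (polySmul h (uGen F q m s ⟨i + j, hij⟩)) =
      polySmul (taylor (-(j : F)) h * pShift q i ^ (s ⟨i, by omega⟩ - s ⟨i + j, hij⟩))
        (uGen F q m s ⟨i, by omega⟩) := by
  induction j generalizing h with
  | zero => simp
  | succ j ih =>
    rw [show (⟨i + (j + 1), hij⟩ : Fin m) = ⟨i + j + 1, hij⟩ from rfl]
    have hle₁ : s ⟨i + j + 1, hij⟩ ≤ s ⟨i + j, by omega⟩ := hs (Fin.mk_le_mk.mpr (by omega))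
    have hle₂ : s ⟨i + j, by omega⟩ ≤ s ⟨i, by omega⟩ := hs (Fin.mk_le_mk.mpr (by omega))
    rw [pow_succ, Module.End.mul_apply, hT.apply_uGen_succ (i + j) hij h, ih, taylor_mul,
      taylor_pow, taylor_neg_pShift, taylor_taylor, mul_assoc, ← pow_add]
    congr 3
    · congr 1; push_cast; ring
    · omega

theorem IsTmap.pow_apply_uGen_of_lt (hT : IsTmap q m s T) (j i : ℕ) (hi : i < m) (hij : i < j)
    (h : F[X]) : (T ^ j) (polySmul h (uGen F q m s ⟨i, hi⟩)) = 0 := by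
  induction j generalizing i h with
  | zero => omega
  | succ j ih =>
    rw [pow_succ, Module.End.mul_apply]
    rcases i with _ | i
    · rw [hT.apply_uGen_zero, map_zero]
    · rw [hT.apply_uGen_succ]
      exact ih i (by omega) (by omega) _

theorem IsTmap.pow_eq_zero (hT : IsTmap q m s T) : T ^ m = 0 :=
  Uspace.end_ext fun i h => hT.pow_apply_uGen_of_lt m i i.isLt i.isLt h

theorem psiMap_apply_uGen_add (hs : Antitone s) (hT : IsTmap q m s T) (g h : F[X])
    (j i : ℕ) (hij : i + j < m) :
    psiMap q m s T j g (polySmul h (uGen F q m s ⟨i + j, hij⟩)) =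
      polySmul (taylor (i : F) g * taylor (-(j : F)) h *
          pShift q i ^ (s ⟨i, by omega⟩ - s ⟨i + j, hij⟩)) (uGen F q m s ⟨i, by omega⟩) := by
  change (T ^ j) (aeval (Eop F q m s) g _) = _
  rw [aeval_Eop_polySmul_uGen, hT.pow_apply_uGen_add hs, taylor_mul, taylor_taylor]
  congr 5
  push_cast
  ring

theorem psiMap_apply_uGen_of_lt (hT : IsTmap q m s T) (g h : F[X]) (j i : ℕ) (hi : i < m)
    (hij : i < j) : psiMap q m s T j g (polySmul h (uGen F q m s ⟨i, hi⟩)) = 0 := by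
  change (T ^ j) (aeval (Eop F q m s) g _) = _
  rw [aeval_Eop_polySmul_uGen, hT.pow_apply_uGen_of_lt j i hi hij]

theorem psiMap_eq_zero_iff (hq : q ≠ 0) (hs : Antitone s) (hT : IsTmap q m s T) {j : ℕ}
    (hj : j < m) (g : F[X]) :
    psiMap q m s T j g = 0 ↔ q ^ s ⟨j, hj⟩ ∣ g := by
  constructor
  · intro hg
    have h0 : 0 + j < m := by omega
    have hdvd := LinearMap.congr_fun hg (polySmul 1 (uGen F q m s ⟨0 + j, h0⟩))
    rw [psiMap_apply_uGen_add hs hT, LinearMap.zero_apply, polySmul_uGen_eq_zero_iff] at hdvd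
    simp only [zero_add, Nat.cast_zero, taylor_zero, taylor_one, C_1, mul_one, pShift_zero]
      at hdvd
    have hle : s ⟨j, hj⟩ ≤ s ⟨0, by omega⟩ := hs (Fin.mk_le_mk.mpr (Nat.zero_le j))
    have hsplit : q ^ s ⟨0, by omega⟩ = q ^ (s ⟨0, by omega⟩ - s ⟨j, hj⟩) * q ^ s ⟨j, hj⟩ := by
      rw [← pow_add, Nat.sub_add_cancel hle]
    rw [hsplit, mul_comm g] at hdvd
    exact (mul_dvd_mul_iff_left (pow_ne_zero _ hq)).mp hdvd
  · rintro ⟨c, rfl⟩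
    refine Uspace.end_ext fun ⟨i, hi⟩ h => ?_
    rw [LinearMap.zero_apply]
    rcases lt_or_ge i j with hij | hji
    · exact psiMap_apply_uGen_of_lt hT _ h j i hi hij
    obtain ⟨k, rfl⟩ := Nat.exists_eq_add_of_le' hji
    have hle : s ⟨k + j, hi⟩ ≤ s ⟨j, hj⟩ := hs (Fin.mk_le_mk.mpr (by omega))
    rw [psiMap_apply_uGen_add hs hT, polySmul_uGen_eq_zero_iff, taylor_mul, taylor_pow,
      ← pShift_eq_taylor]
    calc pShift q k ^ s ⟨k, _⟩
        ∣ pShift q k ^ s ⟨j, hj⟩ * pShift q k ^ (s ⟨k, by omega⟩ - s ⟨k + j, hi⟩) := by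
          rw [← pow_add]; exact pow_dvd_pow _ (by omega)
      _ ∣ _ := mul_dvd_mul (dvd_mul_of_dvd_left (dvd_mul_right _ _) _) dvd_rfl

end

theorem kernel_and_dim_of_TjE_general
    {F : Type*} [Field F] (q : Polynomial F) (d m : ℕ) (s : Fin m → ℕ)
    (hdata : GoodData F q d m s)
    (T : Module.End F (Uspace F q m s)) (hT : IsTmap q m s T)
    (j : ℕ) (hj : j < m) :
    (∀ g : Polynomial F, psiMap q m s T j g = 0 ↔ g ∈ Ideal.span {q ^ s ⟨j, hj⟩}) ∧
    Module.finrank F (LinearMap.range (psiMap q m s T j)) = d * s ⟨j, hj⟩ ∧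
    T ^ m = 0 := by
  have hker : ∀ g, psiMap q m s T j g = 0 ↔ g ∈ Ideal.span {q ^ s ⟨j, hj⟩} := fun g => by
    rw [Ideal.mem_span_singleton]
    exact psiMap_eq_zero_iff hdata.monic.ne_zero hdata.dec hT hj g
  refine ⟨hker, ?_, hT.pow_eq_zero⟩
  rw [finrank_range_eq_natDegree_of_ker _ _ hker, natDegree_pow, hdata.deg, mul_comm]

/-- For `1 ≤ j < m`, the linear map `F[X] → End_F(U)`,
`g ↦ T^j ∘ g(E)` (which is tautologically surjective onto its image `T^j𝓔`) has kernel
exactly the ideal `(p₁^{s_{j+1}})`; in particular `dim_F T^j𝓔 = d·s_{j+1}`.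
Moreover `T^m = 0`.  (0-based indexing: the paper's `s_{j+1}` is `s ⟨j, _⟩`.) -/
theorem kernel_and_dim_of_TjE
    {F : Type*} [Field F] (q : Polynomial F) (d m : ℕ) (s : Fin m → ℕ)
    (hdata : GoodData F q d m s)
    (T : Module.End F (Uspace F q m s)) (hT : IsTmap q m s T)
    (j : ℕ) (h1 : 1 ≤ j) (hj : j < m) :
    (∀ g : Polynomial F, psiMap q m s T j g = 0 ↔ g ∈ Ideal.span {q ^ s ⟨j, hj⟩}) ∧
    Module.finrank F (LinearMap.range (psiMap q m s T j)) = d * s ⟨j, hj⟩ ∧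
    T ^ m = 0 :=
  kernel_and_dim_of_TjE_general q d m s hdata T hT j hj
end

section
/- The subspaces ⟨A⟩ (the span of A), 𝓔, T𝓔, T²𝓔, …, T^{m−1}𝓔 of End_F(U) are in direct sum. -/
open Polynomial

/-!
`End_F(U)` splits into blocks along `U = U₁ ⊕ ⋯ ⊕ U_m`. The operators `A` and `g(E)` preserve
every `U_i`, while `T` maps `U_l` into `U_{l-1}`, so `T^j g(E)` lowers the summand index by exactly
`j`. A relation `c A + ∑_j T^j g_j(E) = 0` therefore splits by this degree into `T^j g_j(E) = 0`
for `j ≥ 1` and `c A + g_0(E) = 0`. On `U₁` and `U₂` the last relation says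
`p₁^{s₁} ∣ c X + g_0(X)` and `p₁(X + 1)^{s₂} ∣ c X + g_0(X + 1)`; substituting `X - 1` in the
second and subtracting gives `p₁^{s₂} ∣ c` (as `s₂ ≤ s₁`), hence `c = 0`.
-/

theorem iSupIndep_of_sum_eq_zero {R M ι : Type*} [Ring R] [AddCommGroup M] [Module R M]
    [Fintype ι] {p : ι → Submodule R M}
    (h : ∀ v : ι → M, (∀ i, v i ∈ p i) → ∑ i, v i = 0 → ∀ i, v i = 0) : iSupIndep p := by
  classical
  rw [iSupIndep_iff_finsetSum_eq_zero_imp_eq_zero]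
  intro s v hv hsum i hi
  have hext := h (fun j => if j ∈ s then v j else 0)
    (fun j => by split_ifs with hj; exacts [hv j hj, zero_mem _])
    (by rwa [Finset.sum_ite_mem, Finset.univ_inter]) i
  simpa [hi] using hext

theorem CompleteOrthogonalIdempotents.eq_zero_of_forall_mul_mul_eq_zero {R I : Type*}
    [Semiring R] [Fintype I] {e : I → R} (he : CompleteOrthogonalIdempotents e) {x : R}
    (hx : ∀ i l, e i * x * e l = 0) : x = 0 := by
  calc x = (∑ i, e i) * x * ∑ l, e l := by rw [he.complete, one_mul, mul_one]
    _ = 0 := by simp [Finset.mul_sum, Finset.sum_mul, hx]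

theorem LinearMap.completeOrthogonalIdempotents_single_comp_proj {R ι : Type*} [Semiring R]
    [Fintype ι] [DecidableEq ι] {M : ι → Type*} [∀ i, AddCommMonoid (M i)]
    [∀ i, Module R (M i)] :
    CompleteOrthogonalIdempotents
      (fun i => (LinearMap.single R M i ∘ₗ LinearMap.proj i : Module.End R ((i : ι) → M i))) := by
  rw [CompleteOrthogonalIdempotents.iff_ortho_complete]
  refine ⟨fun i j hij => ?_, ?_⟩
  · ext u k
    simp [hij.symm]
  · ext u k
    simp

theorem Algebra.commute_lmul_single_comp_proj {R ι : Type*} [CommSemiring R] [DecidableEq ι]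
    {A : ι → Type*} [∀ i, Semiring (A i)] [∀ i, Algebra R (A i)] (a : (i : ι) → A i) (i : ι) :
    Commute (Algebra.lmul R ((i : ι) → A i) a) (LinearMap.single R A i ∘ₗ LinearMap.proj i) := by
  ext u j
  by_cases hj : j = i
  · subst hj
    simp
  · simp [Pi.single_eq_of_ne hj]

section BlockShift

variable {R : Type*} [Ring R] {n : ℕ} {e : Fin n → R}

/-- With respect to the block decomposition given by `e`, the block `e i * B * e l` of `B` goes
from the `l`-th to the `i`-th summand: `B` lowers the summand index by exactly `k`. -/
def IsBlockShift (e : Fin n → R) (k : ℕ) (B : R) : Prop :=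
  ∀ i l : Fin n, (i : ℕ) + k ≠ l → e i * B * e l = 0

theorem isBlockShift_zero_of_commute (he : OrthogonalIdempotents e) {B : R}
    (hB : ∀ i, Commute B (e i)) : IsBlockShift e 0 B := by
  intro i l hil
  have hne : i ≠ l := fun h => hil (by rw [h, add_zero])
  rw [mul_assoc, (hB l).eq, ← mul_assoc, he.ortho hne, zero_mul]

theorem IsBlockShift.smul {S : Type*} [Monoid S] [DistribMulAction S R] [IsScalarTower S R R]
    [SMulCommClass S R R] {k : ℕ} {B : R} (hB : IsBlockShift e k B) (c : S) :
    IsBlockShift e k (c • B) := by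
  intro i l hil
  rw [mul_smul_comm, smul_mul_assoc, hB i l hil, smul_zero]

theorem IsBlockShift.mul (he : CompleteOrthogonalIdempotents e) {j k : ℕ} {B C : R}
    (hB : IsBlockShift e j B) (hC : IsBlockShift e k C) : IsBlockShift e (j + k) (B * C) := by
  intro i l hil
  calc e i * (B * C) * e l = e i * B * (∑ r, e r) * C * e l := by
        rw [he.complete, mul_one, mul_assoc (e i) B C]
    _ = ∑ r, (e i * B * e r) * (e r * C * e l) := by
        simp only [Finset.mul_sum, Finset.sum_mul]
        refine Finset.sum_congr rfl fun r _ => ?_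
        simp only [← mul_assoc]
        rw [mul_assoc (e i * B) (e r) (e r), (he.idem r).eq]
    _ = 0 := Finset.sum_eq_zero fun r _ => by
        by_cases hr : (i : ℕ) + j = r
        · rw [hC r l (by omega), mul_zero]
        · rw [hB i r hr, zero_mul]

theorem IsBlockShift.pow (he : CompleteOrthogonalIdempotents e) {k : ℕ} {B : R}
    (hB : IsBlockShift e k B) (j : ℕ) : IsBlockShift e (j * k) (B ^ j) := by
  induction j with
  | zero =>
    rw [zero_mul, pow_zero]
    exact isBlockShift_zero_of_commute he.toOrthogonalIdempotents fun i => Commute.one_left _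
  | succ j ih =>
    rw [pow_succ, Nat.succ_mul]
    exact ih.mul he hB

theorem sum_ite_eq_zero_of_isBlockShift (he : CompleteOrthogonalIdempotents e) {ι : Type*}
    [Fintype ι] {σ : ι → ℕ} {B : ι → R} (hB : ∀ r, IsBlockShift e (σ r) (B r))
    (hsum : ∑ r, B r = 0) (k : ℕ) : ∑ r, (if σ r = k then B r else 0) = 0 := by
  refine he.eq_zero_of_forall_mul_mul_eq_zero fun i l => ?_
  simp only [Finset.mul_sum, Finset.sum_mul]
  by_cases hil : (i : ℕ) + k = l
  · calc ∑ r, e i * (if σ r = k then B r else 0) * e l = ∑ r, e i * B r * e l :=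
          Finset.sum_congr rfl fun r _ => by
            split_ifs with hr
            · rfl
            · rw [mul_zero, zero_mul, hB r i l (by omega)]
      _ = 0 := by rw [← Finset.sum_mul, ← Finset.mul_sum, hsum, mul_zero, zero_mul]
  · refine Finset.sum_eq_zero fun r _ => ?_
    split_ifs with hr
    · exact hB r i l (hr ▸ hil)
    · rw [mul_zero, zero_mul]

end BlockShift

section Uspace

variable {F : Type*} [Field F] {q : Polynomial F} {m : ℕ} {s : Fin m → ℕ}

/-- `U` with its product ring structure; `A` and `E` are the multiplications by `(X)_i` and
`(X + i)_i` in it. -/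
abbrev UAlgebra (F : Type*) [Field F] (q : Polynomial F) (m : ℕ) (s : Fin m → ℕ) : Type _ :=
  (i : Fin m) → F[X] ⧸ Ideal.span {pShift q i ^ s i}

noncomputable def Uspace.summandProj (F : Type*) [Field F] (q : Polynomial F) (m : ℕ)
    (s : Fin m → ℕ) (i : Fin m) : Module.End F (Uspace F q m s) :=
  LinearMap.single F _ i ∘ₗ LinearMap.proj i

theorem Uspace.completeOrthogonalIdempotents_summandProj :
    CompleteOrthogonalIdempotents (Uspace.summandProj F q m s) :=
  LinearMap.completeOrthogonalIdempotents_single_comp_proj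

theorem aeval_Eop (g : F[X]) :
    aeval (Eop F q m s) g = LinearMap.pi fun i : Fin m =>
      (LinearMap.mulLeft F (Ideal.Quotient.mk (Ideal.span {(pShift q i) ^ (s i)})
        (g.comp (X + C (i : F))))).comp (LinearMap.proj i) := by
  show aeval (Algebra.lmul F (UAlgebra F q m s)
    fun i => Ideal.Quotient.mk _ (X + C (i : F))) g = Algebra.lmul F _ _
  rw [aeval_algHom_apply, aeval_pi_apply]
  congr 1
  funext i
  rw [← Ideal.Quotient.mkₐ_eq_mk F, aeval_algHom_apply, comp_eq_aeval]

theorem isBlockShift_Aop : IsBlockShift (Uspace.summandProj F q m s) 0 (Aop F q m s) :=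
  isBlockShift_zero_of_commute
    Uspace.completeOrthogonalIdempotents_summandProj.toOrthogonalIdempotents
    (Algebra.commute_lmul_single_comp_proj _)

theorem isBlockShift_aeval_Eop (g : F[X]) :
    IsBlockShift (Uspace.summandProj F q m s) 0 (aeval (Eop F q m s) g) := by
  rw [aeval_Eop]
  exact isBlockShift_zero_of_commute
    Uspace.completeOrthogonalIdempotents_summandProj.toOrthogonalIdempotents
    (Algebra.commute_lmul_single_comp_proj _)

theorem dvd_of_smul_Aop_add_aeval_Eop_eq_zero {c : F} {g : F[X]}
    (h : c • Aop F q m s + aeval (Eop F q m s) g = 0) (l : Fin m) :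
    pShift q l ^ s l ∣ C c * X + g.comp (X + C (l : F)) := by
  rw [aeval_Eop] at h
  have h' : Algebra.lmul F (UAlgebra F q m s)
      (c • (fun i => Ideal.Quotient.mk _ X : UAlgebra F q m s)
        + fun i : Fin m => Ideal.Quotient.mk _ (g.comp (X + C (i : F)))) = Algebra.lmul F _ 0 := by
    rw [map_add, map_smul, map_zero]
    exact h
  have hl := congrFun (Algebra.lmul_injective h') l
  rw [← Ideal.mem_span_singleton, ← Ideal.Quotient.eq_zero_iff_mem, ← Ideal.Quotient.mkₐ_eq_mk F,
    map_add, ← smul_eq_C_mul, map_smul]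
  exact hl

theorem eq_zero_of_smul_Aop_add_aeval_Eop_eq_zero (hq : ¬IsUnit q) (hm : 1 < m)
    (hs : s ⟨1, hm⟩ ≤ s ⟨0, by omega⟩) (hs₁ : 0 < s ⟨1, hm⟩) {c : F} {g : F[X]}
    (h : c • Aop F q m s + aeval (Eop F q m s) g = 0) : c = 0 := by
  have h₀ : q ^ s ⟨1, hm⟩ ∣ C c * X + g := by
    have hdvd := dvd_of_smul_Aop_add_aeval_Eop_eq_zero h ⟨0, by omega⟩
    simp only [pShift] at hdvd
    exact (pow_dvd_pow q hs).trans (by simpa using hdvd)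
  have h₁ : q ^ s ⟨1, hm⟩ ∣ C c * (X - 1) + g := by
    have hdvd := map_dvd (compRingHom (X - C 1)) (dvd_of_smul_Aop_add_aeval_Eop_eq_zero h ⟨1, hm⟩)
    simp only [pShift] at hdvd
    simpa [comp_assoc] using hdvd
  have hc : q ^ s ⟨1, hm⟩ ∣ C c := by simpa [mul_sub] using dvd_sub h₀ h₁
  by_contra hc0
  exact (isUnit_pow_iff hs₁.ne').not.mpr hq (isUnit_of_dvd_unit hc (isUnit_C.mpr (Ne.isUnit hc0)))

variable {T : Module.End F (Uspace F q m s)}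

theorem IsTmap.map_polySmul (hT : IsTmap q m s T) (h : F[X]) (u : Uspace F q m s) :
    T (polySmul h u) = polySmul (h.comp (X - C 1)) (T u) := by
  have hX : ((X : F[X]) - C 1).comp (X + C 1) = X := by simp [sub_comp]
  have key := hT.2.2 (h.comp (X - C 1)) u
  rwa [comp_assoc, hX, comp_X] at key

theorem IsTmap.apply_single_apply_eq_zero (hT : IsTmap q m s T) {i l : Fin m}
    (hil : (i : ℕ) + 1 ≠ l) (x : F[X] ⧸ Ideal.span {pShift q l ^ s l}) :
    T (Pi.single l x : Uspace F q m s) i = 0 := by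
  obtain ⟨h, rfl⟩ := Ideal.Quotient.mk_surjective x
  have hx : (Pi.single l (Ideal.Quotient.mk _ h) : Uspace F q m s) =
      polySmul h (uGen F q m s l) := by
    funext j
    by_cases hj : j = l
    · subst hj
      simp [polySmul, uGen]
    · simp [polySmul, uGen, Pi.single_eq_of_ne hj]
  rw [hx, hT.map_polySmul]
  show Ideal.Quotient.mk _ _ * T (uGen F q m s l) i = 0
  obtain ⟨_ | l, hl⟩ := l
  · rw [hT.1 hl]
    exact mul_zero _
  · rw [hT.2.1 l hl]
    simp only [polySmul, uGen]
    rw [Pi.single_eq_of_ne (Fin.ne_of_val_ne (by simpa using hil)), mul_zero, mul_zero]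

theorem IsTmap.isBlockShift (hT : IsTmap q m s T) :
    IsBlockShift (Uspace.summandProj F q m s) 1 T := by
  intro i l hil
  refine LinearMap.ext fun u => ?_
  show Pi.single i (T (Pi.single l (u l)) i) = (0 : Uspace F q m s)
  rw [hT.apply_single_apply_eq_zero hil, Pi.single_zero]
  rfl

theorem IsTmap.isBlockShift_psiMap (hT : IsTmap q m s T) (j : ℕ) (g : F[X]) :
    IsBlockShift (Uspace.summandProj F q m s) j (psiMap q m s T j g) := by
  have he := Uspace.completeOrthogonalIdempotents_summandProj (F := F) (q := q) (s := s)
  show IsBlockShift _ j (T ^ j * aeval (Eop F q m s) g)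
  simpa using (hT.isBlockShift.pow he j).mul he (isBlockShift_aeval_Eop g)

end Uspace

/-- The subspaces `⟨A⟩` (the span of `A`), `𝓔 = T⁰𝓔`, `T𝓔`, `T²𝓔`, …,
`T^{m−1}𝓔` of `End_F(U)` are in direct sum (i.e. they form an independent family of
submodules). -/
theorem independent_A_and_TjE
    {F : Type*} [Field F] (q : Polynomial F) (d m : ℕ) (s : Fin m → ℕ)
    (hdata : GoodData F q d m s)
    (T : Module.End F (Uspace F q m s)) (hT : IsTmap q m s T) :
    iSupIndep (fun k : Fin (m + 1) =>
      (Fin.cases (F ∙ Aop F q m s)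
        (fun j : Fin m => LinearMap.range (psiMap q m s T j)) k :
          Submodule F (Module.End F (Uspace F q m s)))) := by
  have hm := hdata.hm
  refine iSupIndep_of_sum_eq_zero fun v hv hsum => ?_
  obtain ⟨c, hc⟩ := Submodule.mem_span_singleton.mp (hv 0)
  choose g hg using fun j : Fin m => LinearMap.mem_range.mp (hv j.succ)
  have hshift : ∀ k, IsBlockShift (Uspace.summandProj F q m s)
      (Fin.cases 0 (fun j : Fin m => (j : ℕ)) k) (v k) := by
    intro k
    cases k using Fin.cases with
    | zero => rw [← hc]; exact isBlockShift_Aop.smul c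
    | succ j => rw [← hg j]; exact hT.isBlockShift_psiMap j (g j)
  have hdeg : ∀ j : Fin m, (if 0 = (j : ℕ) then v 0 else 0) + v j.succ = 0 := by
    intro j
    convert sum_ite_eq_zero_of_isBlockShift Uspace.completeOrthogonalIdempotents_summandProj
      hshift hsum j using 1
    simp only [Fin.sum_univ_succ, Fin.cases_zero, Fin.cases_succ, Fin.val_inj, Finset.sum_ite_eq',
      Finset.mem_univ, if_true]
    rfl
  have hc0 : c = 0 := by
    refine eq_zero_of_smul_Aop_add_aeval_Eop_eq_zero hdata.irr.not_isUnit hm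
      (hdata.dec _ _ (by simp)) (hdata.pos _) (g := g ⟨0, by omega⟩) ?_
    simpa [hc, ← hg, psiMap] using hdeg ⟨0, by omega⟩
  have hv0 : v 0 = 0 := by rw [← hc, hc0, zero_smul]
  intro k
  cases k using Fin.cases with
  | zero => exact hv0
  | succ j => simpa [hv0] using hdeg j
end

section
/- Let F be a field, A ∈ M_m(F), B ∈ M_n(F), and let K be an algebraic closure of F. Consider the F-endomorphism ℓ_A − r_B of M_{m,n}(F) given by Y ↦ AY − YB. Then every eigenvalue of ℓ_A − r_B in K is of the form α − β, where α is a root in K of the minimal polynomial of A and β is a root in K of the minimal polynomial of B. -/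
open Polynomial

/-- The endomorphism `Y ↦ A·Y − Y·B` of the space of `m × n` matrices. -/
def sylvesterMap {F : Type*} [Field F] {m n : ℕ}
    (A : Matrix (Fin m) (Fin m) F) (B : Matrix (Fin n) (Fin n) F) :
    Matrix (Fin m) (Fin n) F →ₗ[F] Matrix (Fin m) (Fin n) F where
  toFun Y := A * Y - Y * B
  map_add' X Y := by simp only [Matrix.mul_add, Matrix.add_mul]; abel
  map_smul' c X := by
    simp only [Matrix.mul_smul, Matrix.smul_mul, RingHom.id_apply, smul_sub]

/-!
Over the algebraic closure, a root `μ` of the characteristic polynomial is an eigenvalue of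
`Y ↦ AY − YB`: there is `Y ≠ 0` with `AY = Y(B + μ)`. Then `p(A)Y = Yp(B + μ)` for every
polynomial `p`; taking `p` the characteristic polynomial of `A` shows that `p(B + μ)` is singular,
so by the spectral mapping theorem some eigenvalue `α` of `A` is an eigenvalue of `B + μ`, i.e.
`β = α − μ` is an eigenvalue of `B`. Finally, every eigenvalue in `K` of a matrix over `F` is a
root of its minimal polynomial over `F`.
-/

section BaseChange

variable {R S : Type*} [CommRing R] [CommRing S] [Algebra R S]
  {ι κ : Type*} [Fintype ι] [Fintype κ]

theorem Matrix.stdBasis_repr_apply (M : Matrix ι κ R) (p : ι × κ) :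
    (Matrix.stdBasis R ι κ).repr M p = M p.1 p.2 := by
  simp [Matrix.stdBasis, Pi.basis_repr]

variable [DecidableEq ι] [DecidableEq κ]

theorem LinearMap.charpoly_eq_map_charpoly_of_map_comm
    (f : Matrix ι κ R →ₗ[R] Matrix ι κ R) (g : Matrix ι κ S →ₗ[S] Matrix ι κ S)
    (h : ∀ Y, g (Y.map (algebraMap R S)) = (f Y).map (algebraMap R S)) :
    g.charpoly = f.charpoly.map (algebraMap R S) := by
  have hmat : toMatrix (Matrix.stdBasis S ι κ) (Matrix.stdBasis S ι κ) g
      = (toMatrix (Matrix.stdBasis R ι κ) (Matrix.stdBasis R ι κ) f).map (algebraMap R S) := by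
    ext ⟨i, j⟩ ⟨k, l⟩
    have hsingle : (Matrix.single k l (1 : R)).map (algebraMap R S) = Matrix.single k l 1 := by
      rw [Matrix.map_single, map_one]
    simp only [Matrix.map_apply, toMatrix_apply, Matrix.stdBasis_eq_single, ← hsingle, h,
      Matrix.stdBasis_repr_apply]
  rw [← charpoly_toMatrix f (Matrix.stdBasis R ι κ),
    ← charpoly_toMatrix g (Matrix.stdBasis S ι κ), hmat, Matrix.charpoly_map]

end BaseChange

theorem charpoly_sylvesterMap_map {F K : Type*} [Field F] [Field K] [Algebra F K] {m n : ℕ}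
    (A : Matrix (Fin m) (Fin m) F) (B : Matrix (Fin n) (Fin n) F) :
    (sylvesterMap (A.map (algebraMap F K)) (B.map (algebraMap F K))).charpoly
      = (sylvesterMap A B).charpoly.map (algebraMap F K) :=
  LinearMap.charpoly_eq_map_charpoly_of_map_comm _ _ fun Y => by
    simp only [_root_.sylvesterMap, LinearMap.coe_mk, AddHom.coe_mk, Matrix.map_mul,
      Matrix.map_sub _ (map_sub _)]

theorem spectrum.eval_eq_zero_of_aeval_eq_zero {𝕜 𝒜 : Type*} [Field 𝕜] [Ring 𝒜] [Algebra 𝕜 𝒜]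
    {a : 𝒜} {p : 𝕜[X]} (hp : aeval a p = 0) {x : 𝕜} (hx : x ∈ spectrum 𝕜 a) : p.eval x = 0 := by
  rcases subsingleton_or_nontrivial 𝒜 with _ | _
  · simp [spectrum.of_subsingleton] at hx
  simpa [hp, spectrum.zero_eq] using spectrum.subset_polynomial_aeval a p ⟨x, hx, rfl⟩

theorem Matrix.aeval_minpoly_eq_zero_of_mem_spectrum_map {F K : Type*} [Field F] [Field K]
    [Algebra F K] {ι : Type*} [Fintype ι] [DecidableEq ι] (A : Matrix ι ι F) {α : K}
    (hα : α ∈ spectrum K (A.map (algebraMap F K))) : aeval α (minpoly F A) = 0 := by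
  rw [aeval_def, ← eval_map]
  refine spectrum.eval_eq_zero_of_aeval_eq_zero ?_ hα
  rw [aeval_map_algebraMap]
  change aeval ((Algebra.ofId F K).mapMatrix A) _ = 0
  rw [aeval_algHom_apply, minpoly.aeval, map_zero]

section Intertwining

variable {ι κ : Type*} [Fintype ι] [Fintype κ] [DecidableEq ι] [DecidableEq κ]

theorem Matrix.aeval_mul_eq_mul_aeval_of_mul_eq_mul {R : Type*} [CommRing R] {A : Matrix ι ι R}
    {C : Matrix κ κ R} {Y : Matrix ι κ R} (h : A * Y = Y * C) (p : R[X]) :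
    aeval A p * Y = Y * aeval C p := by
  induction p using Polynomial.induction_on with
  | C a => simp [Algebra.algebraMap_eq_smul_one]
  | add p q hp hq => simp only [map_add, Matrix.add_mul, Matrix.mul_add, hp, hq]
  | monomial k a ih =>
    calc aeval A (.C a * X ^ (k + 1)) * Y = aeval A (.C a * X ^ k) * (A * Y) := by
          rw [pow_succ, ← mul_assoc, aeval_mul, aeval_X, Matrix.mul_assoc]
      _ = Y * aeval C (.C a * X ^ (k + 1)) := by
          rw [h, ← Matrix.mul_assoc, ih, Matrix.mul_assoc]
          conv_rhs => rw [pow_succ, ← mul_assoc, aeval_mul, aeval_X]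

theorem Matrix.spectrum_inter_nonempty_of_mul_eq_mul {K : Type*} [Field K] [IsAlgClosed K]
    {A : Matrix ι ι K} {C : Matrix κ κ K} {Y : Matrix ι κ K} (hY : Y ≠ 0) (h : A * Y = Y * C) :
    (spectrum K A ∩ spectrum K C).Nonempty := by
  obtain ⟨i, -⟩ : ∃ i j, Y i j ≠ 0 := by
    by_contra! hzero
    exact hY (Matrix.ext hzero)
  have : Nonempty ι := ⟨i⟩
  have hdeg : 0 < A.charpoly.degree := by
    rw [Matrix.charpoly_degree_eq_dim, Nat.cast_pos]
    exact Fintype.card_pos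
  have hsingular : ¬IsUnit (aeval C A.charpoly) := by
    intro hunit
    have hkill : Y * aeval C A.charpoly = 0 := by
      rw [← aeval_mul_eq_mul_aeval_of_mul_eq_mul h, Matrix.aeval_self_charpoly, Matrix.zero_mul]
    have hdet := (Matrix.isUnit_iff_isUnit_det _).mp hunit
    exact hY (by simpa [Matrix.mul_assoc, Matrix.mul_nonsing_inv _ hdet]
      using congrArg (· * (aeval C A.charpoly)⁻¹) hkill)
  rw [← spectrum.zero_mem_iff K, spectrum.map_polynomial_aeval_of_degree_pos C _ hdeg]
    at hsingular
  obtain ⟨γ, hγC, hγ⟩ := hsingular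
  exact ⟨γ, Matrix.mem_spectrum_iff_isRoot_charpoly.mpr hγ, hγC⟩

end Intertwining

theorem exists_sub_eq_of_hasEigenvalue_sylvesterMap {K : Type*} [Field K] [IsAlgClosed K]
    {m n : ℕ} {A : Matrix (Fin m) (Fin m) K} {B : Matrix (Fin n) (Fin n) K} {μ : K}
    (h : Module.End.HasEigenvalue (sylvesterMap A B) μ) :
    ∃ α ∈ spectrum K A, ∃ β ∈ spectrum K B, μ = α - β := by
  obtain ⟨Y, hY⟩ := h.exists_hasEigenvector
  have hAY : A * Y = Y * (algebraMap K _ μ + B) := by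
    rw [Matrix.mul_add, Algebra.algebraMap_eq_smul_one, Matrix.mul_smul, Matrix.mul_one,
      ← sub_eq_iff_eq_add]
    exact hY.apply_eq_smul
  obtain ⟨α, hαA, hαC⟩ := Matrix.spectrum_inter_nonempty_of_mul_eq_mul hY.2 hAY
  rw [← spectrum.singleton_add_eq] at hαC
  obtain ⟨μ', hμ', β, hβ, rfl⟩ := hαC
  exact ⟨μ' + β, hαA, β, hβ, by rw [Set.eq_of_mem_singleton hμ', add_sub_cancel_right]⟩

/-- Let `F` be a field, `A ∈ M_m(F)`, `B ∈ M_n(F)` and let `K` be an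
algebraic closure of `F`.  Every eigenvalue in `K` of the endomorphism
`ℓ_A − r_B : Y ↦ A·Y − Y·B` of `M_{m,n}(F)` (i.e. every root in `K` of its characteristic
polynomial over `F`) has the form `α − β` where `α` is a root of the minimal polynomial
of `A` and `β` is a root of the minimal polynomial of `B`. -/
theorem eigenvalues_of_sylvester_map
    (F : Type*) [Field F] (K : Type*) [Field K] [Algebra F K] [IsAlgClosure F K]
    (m n : ℕ) (A : Matrix (Fin m) (Fin m) F) (B : Matrix (Fin n) (Fin n) F)
    (μ : K) (hμ : aeval μ (LinearMap.charpoly (sylvesterMap A B)) = 0) :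
    ∃ α β : K, aeval α (minpoly F A) = 0 ∧ aeval β (minpoly F B) = 0 ∧ μ = α - β := by
  have : IsAlgClosed K := IsAlgClosure.isAlgClosed F
  have hμ' : Module.End.HasEigenvalue
      (sylvesterMap (A.map (algebraMap F K)) (B.map (algebraMap F K))) μ := by
    rwa [Module.End.hasEigenvalue_iff_isRoot_charpoly, charpoly_sylvesterMap_map, IsRoot,
      eval_map_algebraMap]
  obtain ⟨α, hα, β, hβ, hμαβ⟩ := exists_sub_eq_of_hasEigenvalue_sylvesterMap hμ'
  exact ⟨α, β, A.aeval_minpoly_eq_zero_of_mem_spectrum_map hα,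
    B.aeval_minpoly_eq_zero_of_mem_spectrum_map hβ, hμαβ⟩
end

section
/- Let F be a field, A ∈ M_m(F) and B ∈ M_n(F). If the minimal polynomials of A and B are coprime, i.e., gcd(μ_A, μ_B) = 1, then the F-linear map M_{m,n}(F) → M_{m,n}(F), Y ↦ AY − YB, is an isomorphism. -/
private lemma aeval_comm_aux (F : Type*) [Field F] (m n : ℕ)
    (A : Matrix (Fin m) (Fin m) F) (B : Matrix (Fin n) (Fin n) F)
    (Y : Matrix (Fin m) (Fin n) F) (hc : A * Y = Y * B) (p : Polynomial F) :
    (Polynomial.aeval A p) * Y = Y * (Polynomial.aeval B p) := by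
  have hpow : ∀ k : ℕ, A ^ k * Y = Y * B ^ k := by
    intro k
    induction k with
    | zero => simp
    | succ k ih =>
      rw [pow_succ', Matrix.mul_assoc, ih, ← Matrix.mul_assoc, hc, Matrix.mul_assoc, ← pow_succ']
  induction p using Polynomial.induction_on' with
  | add p q hp hq => simp [Matrix.add_mul, Matrix.mul_add, hp, hq]
  | monomial k a =>
    simp only [Polynomial.aeval_monomial, Matrix.smul_mul, Matrix.mul_smul,
      Algebra.algebraMap_eq_smul_one, smul_mul_assoc, mul_smul_comm, one_mul, mul_one]
    rw [hpow]

/-- Let `F` be a field, `A ∈ M_m(F)`, `B ∈ M_n(F)`.  If the minimal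
polynomials of `A` and `B` are coprime, then the `F`-linear map
`M_{m,n}(F) → M_{m,n}(F)`, `Y ↦ A·Y − Y·B`, is an isomorphism. -/
theorem sylvester_map_bijective_of_coprime_minpoly
    (F : Type*) [Field F] (m n : ℕ)
    (A : Matrix (Fin m) (Fin m) F) (B : Matrix (Fin n) (Fin n) F)
    (h : IsCoprime (minpoly F A) (minpoly F B)) :
    Function.Bijective (fun Y : Matrix (Fin m) (Fin n) F => A * Y - Y * B) := by
  set f : Matrix (Fin m) (Fin n) F →ₗ[F] Matrix (Fin m) (Fin n) F :=
    { toFun := fun Y => A * Y - Y * B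
      map_add' := by intro x y; simp [Matrix.mul_add, Matrix.add_mul]; abel
      map_smul' := by intro c x; simp [Matrix.mul_smul, Matrix.smul_mul, smul_sub] }
  have hinj : Function.Injective f := by
    rw [← LinearMap.ker_eq_bot, LinearMap.ker_eq_bot']
    intro Y hY
    have hc : A * Y = Y * B := by
      have : A * Y - Y * B = 0 := hY
      linear_combination (norm := noncomm_ring) this
    obtain ⟨u, v, huv⟩ := h
    have h1 : (Polynomial.aeval A (u * minpoly F A + v * minpoly F B)) * Y = Y := by
      rw [huv]; simp
    rw [map_add, map_mul, map_mul, minpoly.aeval, mul_zero, zero_add,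
      Matrix.mul_assoc, aeval_comm_aux F m n A B Y hc, minpoly.aeval,
      Matrix.mul_zero, Matrix.mul_zero] at h1
    exact h1.symm
  have hsurj : Function.Surjective f := (LinearMap.injective_iff_surjective).mp hinj
  exact ⟨hinj, hsurj⟩
end

section
/- Let F be an arbitrary field and let A be a block upper triangular matrix over F with diagonal blocks A₁,…,A_m (not necessarily of the same size). Then there exists a block upper triangular matrix P over F, of the same block structure, whose diagonal blocks are identity matrices, such that B = P⁻¹AP satisfies: for all i < j, if gcd(μ_{A_i}, μ_{A_j}) = 1 then the (i,j) block of B is 0. -/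
set_option linter.unusedSectionVars false
set_option maxHeartbeats 1000000

/-- The `(i,j)` block of a matrix indexed by a sigma type `Σ i, Fin (k i)`. -/
def matrixBlock {F : Type*} {m : ℕ} {k : Fin m → ℕ}
    (M : Matrix ((i : Fin m) × Fin (k i)) ((i : Fin m) × Fin (k i)) F) (i j : Fin m) :
    Matrix (Fin (k i)) (Fin (k j)) F :=
  fun a b => M ⟨i, a⟩ ⟨j, b⟩

section Helpers
variable {F : Type*} [Field F] {m : ℕ} {k : Fin m → ℕ}

local notation "Mat" => Matrix ((i : Fin m) × Fin (k i)) ((i : Fin m) × Fin (k i)) F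

theorem matrixBlock_ext {M N : Mat} (h : ∀ i j, matrixBlock M i j = matrixBlock N i j) :
    M = N := by
  ext ⟨i, a⟩ ⟨j, b⟩
  exact congrFun (congrFun (h i j) a) b

@[simp] theorem matrixBlock_add (M N : Mat) (i j : Fin m) :
    matrixBlock (M + N) i j = matrixBlock M i j + matrixBlock N i j := rfl

@[simp] theorem matrixBlock_sub (M N : Mat) (i j : Fin m) :
    matrixBlock (M - N) i j = matrixBlock M i j - matrixBlock N i j := rfl

@[simp] theorem matrixBlock_zero (i j : Fin m) :
    matrixBlock (0 : Mat) i j = 0 := rfl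

theorem matrixBlock_one_same (i : Fin m) : matrixBlock (1 : Mat) i i = 1 := by
  ext a b
  by_cases h : a = b <;> simp [matrixBlock, Matrix.one_apply, h]

theorem matrixBlock_one_ne {i j : Fin m} (h : i ≠ j) : matrixBlock (1 : Mat) i j = 0 := by
  ext a b
  simp [matrixBlock, Matrix.one_apply]
  intro hc
  exact absurd hc h

theorem matrixBlock_mul (M N : Mat) (p q : Fin m) :
    matrixBlock (M * N) p q = ∑ r, matrixBlock M p r * matrixBlock N r q := by
  ext a b
  show (M * N) ⟨p, a⟩ ⟨q, b⟩ = (∑ r, matrixBlock M p r * matrixBlock N r q) a b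
  rw [Matrix.mul_apply, Matrix.sum_apply]
  rw [show (Finset.univ : Finset ((i : Fin m) × Fin (k i))) = Finset.univ.sigma (fun _ => Finset.univ) from rfl]
  rw [Finset.sum_sigma]
  simp [matrixBlock, Matrix.mul_apply]

theorem blockTriangular_iff {M : Mat} :
    Matrix.BlockTriangular M Sigma.fst ↔ ∀ p q : Fin m, q < p → matrixBlock M p q = 0 := by
  constructor
  · intro h p q hqp
    ext a b
    exact h hqp
  · intro h p q hqp
    exact congrFun (congrFun (h p.1 q.1 hqp) p.2) q.2

def embBlock (i j : Fin m) (X : Matrix (Fin (k i)) (Fin (k j)) F) : Mat :=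
  fun p q => if hp : p.1 = i then (if hq : q.1 = j then X (hp ▸ p.2) (hq ▸ q.2) else 0) else 0

@[simp] theorem matrixBlock_embBlock_same (i j : Fin m) (X : Matrix (Fin (k i)) (Fin (k j)) F) :
    matrixBlock (embBlock i j X) i j = X := by
  ext a b
  simp [matrixBlock, embBlock]

theorem matrixBlock_embBlock_ne_left {i j p : Fin m} (hp : p ≠ i)
    (X : Matrix (Fin (k i)) (Fin (k j)) F) (q : Fin m) :
    matrixBlock (embBlock i j X) p q = 0 := by
  ext a b
  simp [matrixBlock, embBlock, hp]

theorem matrixBlock_embBlock_ne_right {i j q : Fin m} (hq : q ≠ j)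
    (X : Matrix (Fin (k i)) (Fin (k j)) F) (p : Fin m) :
    matrixBlock (embBlock i j X) p q = 0 := by
  ext a b
  simp [matrixBlock, embBlock, hq]

theorem matrixBlock_mul_embBlock_same (M : Mat) (i j : Fin m)
    (X : Matrix (Fin (k i)) (Fin (k j)) F) (p : Fin m) :
    matrixBlock (M * embBlock i j X) p j = matrixBlock M p i * X := by
  rw [matrixBlock_mul, Finset.sum_eq_single i]
  · rw [matrixBlock_embBlock_same]
  · intro r _ hr
    rw [matrixBlock_embBlock_ne_left hr, Matrix.mul_zero]
  · intro h; exact absurd (Finset.mem_univ i) h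

theorem matrixBlock_mul_embBlock_ne (M : Mat) (i j : Fin m)
    (X : Matrix (Fin (k i)) (Fin (k j)) F) {p q : Fin m} (hq : q ≠ j) :
    matrixBlock (M * embBlock i j X) p q = 0 := by
  rw [matrixBlock_mul]
  apply Finset.sum_eq_zero
  intro r _
  rw [matrixBlock_embBlock_ne_right hq, Matrix.mul_zero]

theorem matrixBlock_embBlock_mul_same (M : Mat) (i j : Fin m)
    (X : Matrix (Fin (k i)) (Fin (k j)) F) (q : Fin m) :
    matrixBlock (embBlock i j X * M) i q = X * matrixBlock M j q := by
  rw [matrixBlock_mul, Finset.sum_eq_single j]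
  · rw [matrixBlock_embBlock_same]
  · intro r _ hr
    rw [matrixBlock_embBlock_ne_right hr, Matrix.zero_mul]
  · intro h; exact absurd (Finset.mem_univ j) h

theorem matrixBlock_embBlock_mul_ne (M : Mat) (i j : Fin m)
    (X : Matrix (Fin (k i)) (Fin (k j)) F) {p q : Fin m} (hp : p ≠ i) :
    matrixBlock (embBlock i j X * M) p q = 0 := by
  rw [matrixBlock_mul]
  apply Finset.sum_eq_zero
  intro r _
  rw [matrixBlock_embBlock_ne_left hp, Matrix.zero_mul]

theorem embBlock_mul_embBlock {i j : Fin m} (hij : i ≠ j)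
    (X Y : Matrix (Fin (k i)) (Fin (k j)) F) :
    embBlock i j X * embBlock i j Y = 0 := by
  ext ⟨p, a⟩ ⟨q, b⟩
  show matrixBlock (embBlock i j X * embBlock i j Y) p q a b = (0 : Mat) ⟨p,a⟩ ⟨q,b⟩
  by_cases hq : q = j
  · subst q
    rw [matrixBlock_mul_embBlock_same, matrixBlock_embBlock_ne_right (q := i) hij, Matrix.zero_mul]
    rfl
  · rw [matrixBlock_mul_embBlock_ne _ _ _ _ hq]
    rfl

theorem matrixBlock_mul_diag {P Q : Mat} (hP : Matrix.BlockTriangular P Sigma.fst)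
    (hQ : Matrix.BlockTriangular Q Sigma.fst) (r : Fin m) :
    matrixBlock (P * Q) r r = matrixBlock P r r * matrixBlock Q r r := by
  rw [matrixBlock_mul, Finset.sum_eq_single r]
  · intro s _ hs
    rcases lt_or_gt_of_ne hs with h | h
    · rw [blockTriangular_iff.mp hP r s h, Matrix.zero_mul]
    · rw [blockTriangular_iff.mp hQ s r h, Matrix.mul_zero]
  · intro h; exact absurd (Finset.mem_univ r) h

end Helpers

section Sylvester
variable {F : Type*} [Field F]

theorem pow_mul_comm_of {n p : ℕ} {A : Matrix (Fin n) (Fin n) F}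
    {B : Matrix (Fin p) (Fin p) F} {X : Matrix (Fin n) (Fin p) F}
    (h : A * X = X * B) (d : ℕ) : A ^ d * X = X * B ^ d := by
  induction d with
  | zero => simp
  | succ d ih =>
    rw [pow_succ, pow_succ, Matrix.mul_assoc, h, ← Matrix.mul_assoc, ih, Matrix.mul_assoc]

theorem aeval_mul_comm_of {n p : ℕ} {A : Matrix (Fin n) (Fin n) F}
    {B : Matrix (Fin p) (Fin p) F} {X : Matrix (Fin n) (Fin p) F}
    (h : A * X = X * B) (q : Polynomial F) :
    (Polynomial.aeval A q) * X = X * (Polynomial.aeval B q) := by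
  induction q using Polynomial.induction_on' with
  | add f g hf hg =>
    rw [map_add, map_add, Matrix.add_mul, Matrix.mul_add, hf, hg]
  | monomial d a =>
    rw [Polynomial.aeval_monomial, Polynomial.aeval_monomial]
    rw [Algebra.algebraMap_eq_smul_one, Algebra.algebraMap_eq_smul_one]
    rw [smul_mul_assoc, smul_mul_assoc, one_mul, one_mul,
      Matrix.smul_mul, Matrix.mul_smul, pow_mul_comm_of h d]

theorem sylvester_surjective {n p : ℕ} (A : Matrix (Fin n) (Fin n) F)
    (B : Matrix (Fin p) (Fin p) F)
    (h : IsCoprime (minpoly F A) (minpoly F B)) (C : Matrix (Fin n) (Fin p) F) :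
    ∃ X : Matrix (Fin n) (Fin p) F, A * X - X * B = C := by
  let T : Matrix (Fin n) (Fin p) F →ₗ[F] Matrix (Fin n) (Fin p) F :=
    { toFun := fun X => A * X - X * B
      map_add' := by
        intro X Y
        rw [Matrix.mul_add, Matrix.add_mul]
        abel
      map_smul' := by
        intro c X
        simp [Matrix.mul_smul, Matrix.smul_mul, smul_sub] }
  have hinj : Function.Injective T := by
    rw [← LinearMap.ker_eq_bot]
    rw [LinearMap.ker_eq_bot']
    intro X hX
    have hc : A * X = X * B := sub_eq_zero.mp hX
    obtain ⟨u, v, huv⟩ := h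
    have h1 : (Polynomial.aeval A) (u * minpoly F A + v * minpoly F B) = 1 := by
      rw [huv]; simp
    have h2 : X = (Polynomial.aeval A) (u * minpoly F A + v * minpoly F B) * X := by
      rw [h1, Matrix.one_mul]
    rw [map_add, map_mul, map_mul, minpoly.aeval, Matrix.mul_zero, zero_add] at h2
    rw [Matrix.mul_assoc, aeval_mul_comm_of hc, ← Matrix.mul_assoc] at h2
    rw [minpoly.aeval, Matrix.mul_zero] at h2
    exact h2
  have hsurj : Function.Surjective T := (LinearMap.injective_iff_surjective).mp hinj
  obtain ⟨X, hX⟩ := hsurj C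
  exact ⟨X, hX⟩

end Sylvester

section Key
variable {F : Type*} [Field F] {m : ℕ} {k : Fin m → ℕ}

local notation "Mat" => Matrix ((i : Fin m) × Fin (k i)) ((i : Fin m) × Fin (k i)) F

theorem key_induction (A : Mat) (hA : Matrix.BlockTriangular A Sigma.fst) (N : ℕ) :
    ∃ P : Mat, Matrix.BlockTriangular P Sigma.fst ∧ (∀ i, matrixBlock P i i = 1) ∧ IsUnit P ∧
      Matrix.BlockTriangular (P⁻¹ * A * P) Sigma.fst ∧
      (∀ i, matrixBlock (P⁻¹ * A * P) i i = matrixBlock A i i) ∧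
      (∀ i j : Fin m, i < j → i.val + (j.val - i.val) * m < N →
        IsCoprime (minpoly F (matrixBlock A i i)) (minpoly F (matrixBlock A j j)) →
        matrixBlock (P⁻¹ * A * P) i j = 0) := by
  induction N with
  | zero =>
    have hone : (1 : Mat)⁻¹ = 1 := Matrix.inv_eq_right_inv (Matrix.one_mul 1)
    refine ⟨1, Matrix.blockTriangular_one, fun i => matrixBlock_one_same i, isUnit_one, ?_, ?_, ?_⟩
    · rw [hone, Matrix.one_mul, Matrix.mul_one]; exact hA
    · intro i; rw [hone, Matrix.one_mul, Matrix.mul_one]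
    · intro i j _ hlt _; omega
  | succ N ih =>
    obtain ⟨P, hPt, hPd, hPu, hBt, hBd, hBz⟩ := ih
    set B := P⁻¹ * A * P with hB
    by_cases hex : ∃ i j : Fin m, i < j ∧ i.val + (j.val - i.val) * m = N ∧
        IsCoprime (minpoly F (matrixBlock A i i)) (minpoly F (matrixBlock A j j))
    · obtain ⟨i, j, hij, hrank, hcop⟩ := hex
      have hij' : i ≠ j := ne_of_lt hij
      have hcop' : IsCoprime (minpoly F (matrixBlock B i i)) (minpoly F (matrixBlock B j j)) := by
        rw [hBd i, hBd j]; exact hcop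
      obtain ⟨X, hX⟩ := sylvester_surjective _ _ hcop' (-(matrixBlock B i j))
      set E : Mat := embBlock i j X with hE
      have hEE : E * E = 0 := embBlock_mul_embBlock hij' X X
      have hPe : (1 + E) * (1 - E) = 1 := by
        have : (1 + E) * (1 - E) = 1 - E * E := by noncomm_ring
        rw [this, hEE, sub_zero]
      have hPe' : (1 - E) * (1 + E) = 1 := by
        have : (1 - E) * (1 + E) = 1 - E * E := by noncomm_ring
        rw [this, hEE, sub_zero]
      have hPeInv : (1 + E)⁻¹ = 1 - E := Matrix.inv_eq_right_inv hPe
      have hPeu : IsUnit (1 + E) := ⟨⟨1 + E, 1 - E, hPe, hPe'⟩, rfl⟩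
      have hEblk : ∀ p q : Fin m, p ≠ i ∨ q ≠ j → matrixBlock E p q = 0 := by
        intro p q hpq
        rcases hpq with hp | hq
        · exact matrixBlock_embBlock_ne_left hp X q
        · exact matrixBlock_embBlock_ne_right hq X p
      have hPet : Matrix.BlockTriangular (1 + E) Sigma.fst := by
        rw [blockTriangular_iff]
        intro p q hqp
        rw [matrixBlock_add, matrixBlock_one_ne (ne_of_gt hqp), hEblk p q ?_, add_zero]
        by_cases hp : p = i
        · right; intro hq; rw [hp, hq] at hqp; exact absurd hij (not_lt_of_gt hqp)
        · left; exact hp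
      have hPed : ∀ r, matrixBlock (1 + E) r r = 1 := by
        intro r
        rw [matrixBlock_add, matrixBlock_one_same, hEblk r r ?_, add_zero]
        by_cases hr : r = i
        · right; rw [hr]; exact hij'
        · left; exact hr
      have hBji : matrixBlock B j i = 0 := blockTriangular_iff.mp hBt j i hij
      -- the conjugated matrix
      set B' : Mat := (1 - E) * B * (1 + E) with hB'def
      have hexp : B' = B + B * E - E * B - E * (B * E) := by
        rw [hB'def]; noncomm_ring
      have hEBE : ∀ p q : Fin m, matrixBlock (E * (B * E)) p q = 0 := by
        intro p q
        by_cases hp : p = i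
        · subst p
          rw [hE, matrixBlock_embBlock_mul_same]
          by_cases hq : q = j
          · subst q
            rw [matrixBlock_mul_embBlock_same, hBji, Matrix.zero_mul, Matrix.mul_zero]
          · rw [matrixBlock_mul_embBlock_ne _ _ _ _ hq, Matrix.mul_zero]
        · rw [hE, matrixBlock_embBlock_mul_ne _ _ _ _ hp]
      have hblk1 : ∀ p q : Fin m, p ≠ i → q ≠ j → matrixBlock B' p q = matrixBlock B p q := by
        intro p q hp hq
        rw [hexp, matrixBlock_sub, matrixBlock_sub, matrixBlock_add, hEBE, sub_zero,
          hE, matrixBlock_mul_embBlock_ne _ _ _ _ hq, matrixBlock_embBlock_mul_ne _ _ _ _ hp,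
          add_zero, sub_zero]
      have hblk2 : ∀ p : Fin m, p ≠ i →
          matrixBlock B' p j = matrixBlock B p j + matrixBlock B p i * X := by
        intro p hp
        rw [hexp, matrixBlock_sub, matrixBlock_sub, matrixBlock_add, hEBE, sub_zero,
          hE, matrixBlock_mul_embBlock_same, matrixBlock_embBlock_mul_ne _ _ _ _ hp, sub_zero]
      have hblk3 : ∀ q : Fin m, q ≠ j →
          matrixBlock B' i q = matrixBlock B i q - X * matrixBlock B j q := by
        intro q hq
        rw [hexp, matrixBlock_sub, matrixBlock_sub, matrixBlock_add, hEBE, sub_zero,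
          hE, matrixBlock_mul_embBlock_ne _ _ _ _ hq, matrixBlock_embBlock_mul_same, add_zero]
      have hblk4 : matrixBlock B' i j =
          matrixBlock B i j + matrixBlock B i i * X - X * matrixBlock B j j := by
        rw [hexp, matrixBlock_sub, matrixBlock_sub, matrixBlock_add, hEBE, sub_zero,
          hE, matrixBlock_mul_embBlock_same, matrixBlock_embBlock_mul_same]
      have hnewB : (P * (1 + E))⁻¹ * A * (P * (1 + E)) = B' := by
        rw [Matrix.mul_inv_rev, hPeInv, hB'def, hB]
        simp only [Matrix.mul_assoc]
      refine ⟨P * (1 + E), hPt.mul hPet, ?_, hPu.mul hPeu, ?_, ?_, ?_⟩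
      · intro r
        rw [matrixBlock_mul_diag hPt hPet, hPd r, hPed r, Matrix.one_mul]
      · rw [hnewB, blockTriangular_iff]
        intro p q hqp
        by_cases hq : q = j
        · subst q
          have hp : p ≠ i := by
            intro hp; rw [hp] at hqp; exact absurd hij (not_lt_of_gt hqp)
          rw [hblk2 p hp, blockTriangular_iff.mp hBt p j hqp,
            blockTriangular_iff.mp hBt p i (lt_trans hij hqp), Matrix.zero_mul, add_zero]
        · by_cases hp : p = i
          · subst p
            rw [hblk3 q hq, blockTriangular_iff.mp hBt i q hqp,
              blockTriangular_iff.mp hBt j q (lt_trans hqp hij), Matrix.mul_zero, sub_zero]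
          · rw [hblk1 p q hp hq]
            exact blockTriangular_iff.mp hBt p q hqp
      · intro r
        rw [hnewB]
        by_cases hr : r = i
        · subst r
          rw [hblk3 i hij', hBji, Matrix.mul_zero, sub_zero]
          exact hBd i
        · by_cases hr' : r = j
          · subst r
            rw [hblk2 j (fun h => hij' h.symm), hBji, Matrix.zero_mul, add_zero]
            exact hBd j
          · rw [hblk1 r r hr hr']
            exact hBd r
      · intro p q hpq hlt hcpq
        rw [hnewB]
        have hm : 0 < m := Fin.pos i
        by_cases hrk : p.val + (q.val - p.val) * m = N
        · -- (p, q) = (i, j)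
          have hpi : p.val = i.val := by
            have := congrArg (· % m) (hrk.trans hrank.symm)
            simpa [Nat.add_mul_mod_self_right, Nat.mod_eq_of_lt p.isLt,
              Nat.mod_eq_of_lt i.isLt] using this
          have hd : (q.val - p.val) * m = (j.val - i.val) * m := by omega
          have hqj : q.val = j.val := by
            have := Nat.eq_of_mul_eq_mul_right hm hd
            have hij2 := hij
            have hpq2 := hpq
            rw [Fin.lt_def] at hij2 hpq2
            omega
          have hpi' : p = i := Fin.ext hpi
          have hqj' : q = j := Fin.ext hqj
          subst p; subst q
          rw [hblk4, add_sub_assoc, hX, add_neg_cancel]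
        · have hlt' : p.val + (q.val - p.val) * m < N := by omega
          by_cases hq : q = j
          · subst q
            by_cases hp : p = i
            · subst p; omega
            · rw [hblk2 p hp, hBz p j hpq hlt' hcpq]
              rcases lt_trichotomy p i with h | h | h
              · exfalso
                have h1 : (j.val - i.val + 1) * m ≤ (j.val - p.val) * m := by
                  apply Nat.mul_le_mul_right
                  have := hij; have := hpq
                  rw [Fin.lt_def] at *
                  omega
                rw [Nat.succ_mul] at h1
                have h2 : i.val < m := i.isLt
                have h3 : p.val < i.val := h
                linarith
              · exact absurd h hp
              · rw [blockTriangular_iff.mp hBt p i h, Matrix.zero_mul, zero_add]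
          · by_cases hp : p = i
            · subst p
              rw [hblk3 q hq, hBz i q hpq hlt' hcpq]
              rcases lt_trichotomy q j with h | h | h
              · rw [blockTriangular_iff.mp hBt j q h, Matrix.mul_zero, sub_zero]
              · exact absurd h hq
              · exfalso
                have h1 : (j.val - i.val + 1) * m ≤ (q.val - i.val) * m := by
                  apply Nat.mul_le_mul_right
                  have := hij; have := hpq
                  rw [Fin.lt_def] at *
                  omega
                rw [Nat.succ_mul] at h1
                have h2 : i.val < m := i.isLt
                linarith
            · rw [hblk1 p q hp hq]
              exact hBz p q hpq hlt' hcpq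
    · -- no pair to treat at this stage
      refine ⟨P, hPt, hPd, hPu, hBt, hBd, ?_⟩
      intro i j hij hlt hcop
      by_cases hrk : i.val + (j.val - i.val) * m = N
      · exact absurd ⟨i, j, hij, hrk, hcop⟩ hex
      · exact hBz i j hij (by omega) hcop

end Key

/-- Let `F` be a field and let `A` be a block upper triangular matrix
over `F` with diagonal blocks `A₁,…,A_m` (of sizes `k 1, …, k m`).  Then there is a block
upper triangular matrix `P`, with identity diagonal blocks, such that `B = P⁻¹ A P`
satisfies: whenever the minimal polynomials of the `i`-th and `j`-th diagonal blocks are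
coprime (`i < j`), the `(i,j)` block of `B` is `0`. -/
theorem exists_blockUpperTriangular_conjugation_clearing_coprime_blocks
    (F : Type*) [Field F] (m : ℕ) (k : Fin m → ℕ)
    (A : Matrix ((i : Fin m) × Fin (k i)) ((i : Fin m) × Fin (k i)) F)
    (hA : Matrix.BlockTriangular A Sigma.fst) :
    ∃ P : Matrix ((i : Fin m) × Fin (k i)) ((i : Fin m) × Fin (k i)) F,
      Matrix.BlockTriangular P Sigma.fst ∧
      (∀ i : Fin m, matrixBlock P i i = 1) ∧
      IsUnit P ∧
      ∀ i j : Fin m, i < j →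
        IsCoprime (minpoly F (matrixBlock A i i)) (minpoly F (matrixBlock A j j)) →
        matrixBlock (P⁻¹ * A * P) i j = 0 := by
  obtain ⟨P, hPt, hPd, hPu, _, _, hPz⟩ := key_induction A hA (m * m)
  refine ⟨P, hPt, hPd, hPu, ?_⟩
  intro i j hij hcop
  apply hPz i j hij ?_ hcop
  have hm : 0 < m := Fin.pos i
  have h1 : (j.val - i.val) * m + m ≤ m * m := by
    rw [← Nat.succ_mul]
    apply Nat.mul_le_mul_right
    have := j.isLt
    have := hij
    rw [Fin.lt_def] at *
    omega
  have h2 : i.val < m := i.isLt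
  linarith
end

section
/- Suppose char F = 0. Let g be a finite-dimensional Lie algebra over F with solvable radical r, and let n = [g, r]. Then n acts trivially on every finite-dimensional irreducible g-module V, i.e., x·v = 0 for all x ∈ n and v ∈ V. -/
/-!
Over an algebraic closure, Lie's theorem gives a solvable ideal `A` a common eigenvector with
weight `χ`, and the weight space of `χ` is stable under all of `L`. On it `⁅z, a⁆` acts by the
scalar `χ ⁅z, a⁆` and, being a commutator, with trace zero; so `⁅L, A⁆` kills the weight space,
and induction on the dimension makes every element of `⁅L, A⁆` act nilpotently on any
finite-dimensional module. Nilpotency descends to `F`. By Engel's theorem `V` is then a nilpotent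
`⁅L, r⁆`-module, so `⁅⁅L, r⁆, V⁆` is a proper submodule, hence zero by irreducibility.
-/

open LieAlgebra LieModule TensorProduct

theorem Module.End.isNilpotent_of_isNilpotent_mapQ {R M : Type*} [Ring R] [AddCommGroup M]
    [Module R M] {f : End R M} {p : Submodule R M} (hp : p ≤ p.comap f)
    (hpf : p ≤ LinearMap.ker f) (hf : IsNilpotent (p.mapQ p f hp)) : IsNilpotent f := by
  obtain ⟨k, hk⟩ := hf
  refine ⟨k + 1, LinearMap.ext fun m => ?_⟩
  have hm : (f ^ k) m ∈ p := by
    have h : p.mapQ p (f ^ k) (p.le_comap_pow_of_le_comap hp k) (Submodule.Quotient.mk m) = 0 := by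
      rw [p.mapQ_pow hp, hk, LinearMap.zero_apply]
    exact (Submodule.Quotient.mk_eq_zero p).mp h
  rw [pow_succ', Module.End.mul_apply]
  exact hpf hm

instance LieIdeal.isSolvable_baseChange {R L : Type*} [CommRing R] [LieRing L] [LieAlgebra R L]
    (A : Type*) [CommRing A] [Algebra R A] (I : LieIdeal R L) [IsSolvable I] :
    IsSolvable (I.baseChange A) := by
  obtain ⟨k, hk⟩ := IsSolvable.solvable R I
  rw [LieIdeal.derivedSeries_eq_bot_iff] at hk
  refine IsSolvable.mk (R := A) (k := k) ?_
  rw [LieIdeal.derivedSeries_eq_bot_iff, derivedSeriesOfIdeal_baseChange, hk,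
    LieSubmodule.baseChange_bot]

namespace LieModule

theorem lie_top_le_ker_weightSpaceOfIsLieTower {K L V : Type*} [Field K] [CharZero K]
    [LieRing L] [LieAlgebra K L] [AddCommGroup V] [Module K V] [LieRingModule L V]
    [LieModule K L V] [Module.Finite K V] (A : LieIdeal K L) (χ : A → K) :
    ⁅(⊤ : LieIdeal K L), A⁆ ≤ LieModule.ker K L (weightSpaceOfIsLieTower (L := L) K V χ) := by
  set W := weightSpaceOfIsLieTower (L := L) K V χ
  have hW (b : A) : toEnd K L W b = χ b • 1 := by
    ext ⟨w, hw⟩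
    simpa using (mem_weightSpace χ w).mp hw b
  rw [LieSubmodule.lie_le_iff]
  intro z _ a ha
  refine (LieModule.mem_ker K L W _).mpr fun w => ?_
  rcases subsingleton_or_nontrivial W with _ | _
  · exact Subsingleton.elim _ _
  set b : A := ⟨⁅z, a⁆, lie_mem_right K L A z a ha⟩
  have htr : χ b * Module.finrank K W = 0 :=
    calc _ = LinearMap.trace K W (toEnd K L W b) := by rw [hW b]; simp
      _ = 0 := trace_toEnd_eq_zero_of_mem_lcs K L W le_rfl
          (LieSubmodule.lie_mem_lie (LieSubmodule.mem_top z) (LieSubmodule.mem_top a))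
  have hb : χ b = 0 := (mul_eq_zero.mp htr).resolve_right (by simpa using Module.finrank_pos.ne')
  have hbw := LinearMap.congr_fun (hW b) w
  rwa [hb, zero_smul, LinearMap.zero_apply] at hbw

theorem isNilpotent_toEnd_of_mem_lie_top_of_isAlgClosed {K L : Type*} [Field K] [IsAlgClosed K]
    [CharZero K] [LieRing L] [LieAlgebra K L] (A : LieIdeal K L) [IsSolvable A]
    (V : Type*) [AddCommGroup V] [Module K V] [LieRingModule L V] [LieModule K L V]
    [Module.Finite K V] {x : L} (hx : x ∈ ⁅(⊤ : LieIdeal K L), A⁆) :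
    _root_.IsNilpotent (toEnd K L V x) := by
  induction hn : Module.finrank K V using Nat.strong_induction_on generalizing V with
  | _ n ih =>
  rcases subsingleton_or_nontrivial V with _ | _
  · exact ⟨1, Subsingleton.elim _ _⟩
  obtain ⟨χ, _⟩ := exists_nontrivial_weightSpace_of_isSolvable K A V
  set W := weightSpaceOfIsLieTower (L := L) K V χ
  have hxW : ∀ w ∈ W, ⁅x, w⁆ = 0 := fun w hw => congrArg Subtype.val <|
    (LieModule.mem_ker K L W x).mp (lie_top_le_ker_weightSpaceOfIsLieTower A χ hx) ⟨w, hw⟩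
  have hlt : Module.finrank K (V ⧸ W) < n := by
    have : Nontrivial W.toSubmodule := inferInstanceAs (Nontrivial (weightSpace V χ))
    have hW : 0 < Module.finrank K W.toSubmodule := Module.finrank_pos
    have := W.toSubmodule.finrank_quotient_add_finrank
    change Module.finrank K (V ⧸ W.toSubmodule) < n
    omega
  exact Module.End.isNilpotent_of_isNilpotent_mapQ (p := W.toSubmodule)
    (fun w hw => W.lie_mem hw) hxW (ih _ hlt (V ⧸ W) rfl)

theorem isNilpotent_toEnd_of_mem_lie_top {F L : Type*} [Field F] [CharZero F] [LieRing L]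
    [LieAlgebra F L] (A : LieIdeal F L) [IsSolvable A]
    (V : Type*) [AddCommGroup V] [Module F V] [LieRingModule L V] [LieModule F L V]
    [Module.Finite F V] {x : L} (hx : x ∈ ⁅(⊤ : LieIdeal F L), A⁆) :
    _root_.IsNilpotent (toEnd F L V x) := by
  let K := AlgebraicClosure F
  have hx' : (1 : K) ⊗ₜ[F] x ∈ ⁅(⊤ : LieIdeal K (K ⊗[F] L)), A.baseChange K⁆ := by
    rw [← LieSubmodule.baseChange_top, ← LieSubmodule.lie_baseChange]
    exact LieSubmodule.tmul_mem_baseChange_of_mem 1 hx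
  have hK := isNilpotent_toEnd_of_mem_lie_top_of_isAlgClosed _ (K ⊗[F] V) hx'
  rw [toEnd_baseChange] at hK
  exact (IsNilpotent.map_iff (f := Module.End.baseChangeHom F K V)
    (LinearMap.baseChangeHom_injective F V K)).mp hK

theorem lie_top_eq_bot_of_isIrreducible {R L M : Type*} [CommRing R] [LieRing L]
    [LieAlgebra R L] [AddCommGroup M] [Module R M] [LieRingModule L M] [LieModule R L M]
    [IsIrreducible R L M] (I : LieIdeal R L) [IsNilpotent I M] :
    ⁅I, (⊤ : LieSubmodule R L M)⁆ = ⊥ := by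
  refine (eq_bot_or_eq_top _).resolve_right fun htop => ?_
  have hlcs (k : ℕ) : I.lcs M k = ⊤ := by
    induction k with
    | zero => rfl
    | succ k ih => rw [LieIdeal.lcs_succ, ih, htop]
  obtain ⟨k, hk⟩ := IsNilpotent.nilpotent R I M
  have : Nontrivial M := nontrivial_of_isIrreducible R L M
  refine bot_ne_top (α := Submodule R M) ?_
  rw [← LieSubmodule.top_toSubmodule (L := L), ← hlcs k, LieIdeal.coe_lcs_eq, hk,
    LieSubmodule.bot_toSubmodule]

end LieModule

/-- Let `F` be a field of characteristic zero, `g` a finite-dimensional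
Lie algebra over `F` with solvable radical `r`, and let `n = ⁅g, r⁆` be its nilpotent
radical.  Then `n` acts trivially on every finite-dimensional irreducible `g`-module `V`. -/
theorem nilpotent_radical_acts_trivially_on_irreducible
    (F : Type*) [Field F] [CharZero F]
    (L : Type*) [LieRing L] [LieAlgebra F L] [Module.Finite F L]
    (V : Type*) [AddCommGroup V] [Module F V] [LieRingModule L V] [LieModule F L V]
    [Module.Finite F V] [LieModule.IsIrreducible F L V]
    (x : L) (hx : x ∈ ⁅(⊤ : LieIdeal F L), LieAlgebra.radical F L⁆) (v : V) :
    ⁅x, v⁆ = 0 := by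
  set n := ⁅(⊤ : LieIdeal F L), radical F L⁆
  have : IsNilpotent n V := (isNilpotent_iff_forall' (R := F)).mpr fun y =>
    isNilpotent_toEnd_of_mem_lie_top (radical F L) V y.2
  have hnV : ⁅n, (⊤ : LieSubmodule F L V)⁆ = ⊥ := lie_top_eq_bot_of_isIrreducible n
  exact (LieSubmodule.mem_bot _).mp (hnV ▸ LieSubmodule.lie_mem_lie hx (LieSubmodule.mem_top v))
end

section
/- Let F be a field and let p₁,…,p_m ∈ F[X] be pairwise distinct monic irreducible polynomials of degree d with p_i(X) = p₁(X+i−1), and s₁ ≥ ⋯ ≥ s_m natural numbers; write C_i = C_{p_i^{s_i}}. Suppose 𝒯' is a block matrix whose only nonzero blocks are L_i in the (i−1,i) positions (2 ≤ i ≤ m), where each L_i ∈ M_{d·s_{i−1}×d·s_i}(F) is injective (nullity 0) and satisfies L_i(C_i + I) = C_{i−1}L_i. Then there exists an invertible block-diagonal matrix P with blocks g_i(C_i), where g_i ∈ F[X] satisfies gcd(g_i, p_i) = 1, such that P𝒯'P⁻¹ = 𝒯, where 𝒯 has blocks B_i = S(−1, p_{i−1}, s_{i−1}, s_i) in the (i−1,i)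 positions and zeros elsewhere; moreover P commutes with the block-diagonal matrix 𝒜 with blocks C₁,…,C_m. -/
open Polynomial

/-- A block diagonal matrix, indexed by `Σ i : Fin m, Fin (k i)`. -/
def blockDiagS {F : Type*} [Field F] {m : ℕ} {k : Fin m → ℕ}
    (M : (i : Fin m) → Matrix (Fin (k i)) (Fin (k i)) F) :
    Matrix ((i : Fin m) × Fin (k i)) ((i : Fin m) × Fin (k i)) F :=
  fun a b => if h : a.1 = b.1 then M a.1 a.2 (Fin.cast (by rw [h]) b.2) else 0

/-- The block diagonal matrix `𝒜` with blocks the companion matrices `C_{pᵢ^{sᵢ}}`. -/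
noncomputable def calA {F : Type*} [Field F] (q : Polynomial F) (d : ℕ) {m : ℕ}
    (ss : Fin m → ℕ) :
    Matrix ((i : Fin m) × Fin (d * ss i)) ((i : Fin m) × Fin (d * ss i)) F :=
  blockDiagS fun i => companionOf ((pShift q i) ^ (ss i)) (d * ss i)

/-- The block diagonal matrix `ℰ` with blocks `C_{pᵢ^{sᵢ}} + (i−1)·I` (0-based: `+ i·I`). -/
noncomputable def calE {F : Type*} [Field F] (q : Polynomial F) (d : ℕ) {m : ℕ}
    (ss : Fin m → ℕ) :
    Matrix ((i : Fin m) × Fin (d * ss i)) ((i : Fin m) × Fin (d * ss i)) F :=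
  blockDiagS fun i => companionOf ((pShift q i) ^ (ss i)) (d * ss i) + ((i : ℕ) : F) • 1

/-- The block matrix `𝒯` whose only nonzero blocks are
`B_i = S(−1, p_{i−1}, s_{i−1}, s_i)` in the positions `(i−1, i)`, `2 ≤ i ≤ m`. -/
noncomputable def calT {F : Type*} [Field F] (q : Polynomial F) (d : ℕ) {m : ℕ}
    (ss : Fin m → ℕ) :
    Matrix ((i : Fin m) × Fin (d * ss i)) ((i : Fin m) × Fin (d * ss i)) F :=
  fun a b =>
    if (a.1 : ℕ) + 1 = (b.1 : ℕ) then Smat (-1) (pShift q a.1) d (ss a.1) (ss b.1) a.2 b.2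
    else 0

/-- The block matrix `𝒯'` whose only nonzero blocks are the `L_i` in the positions
`(i−1, i)`, `2 ≤ i ≤ m`. -/
noncomputable def calTgen {F : Type*} [Field F] {m : ℕ} (d : ℕ) (ss : Fin m → ℕ)
    (Lmat : (i j : Fin m) → (i : ℕ) + 1 = (j : ℕ) →
      Matrix (Fin (d * ss i)) (Fin (d * ss j)) F) :
    Matrix ((i : Fin m) × Fin (d * ss i)) ((i : Fin m) × Fin (d * ss i)) F :=
  fun a b => if h : (a.1 : ℕ) + 1 = (b.1 : ℕ) then Lmat a.1 b.1 h a.2 b.2 else 0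

/-! Identify `Fin N → F` with `F[X] ⧸ (G)` through the coefficients of the remainder modulo `G`
(`modCoeffs`); in these coordinates `companionOf G N` is multiplication by `X`. A matrix `L` with
`L (C_b + 1) = C_a L` is then semilinear for the shift `X ↦ X - 1`, so it sends `x` to
`x(X - 1) · w` with `w` the image of `1`. As `p_a ^ s_a` divides `p_b ^ s_b (X - 1) · w =
p_a ^ s_b · w`, we get `w = p_a ^ (s_a - s_b) · h`, and injectivity of `L` forces `p_a ∤ h`; the
block `S(-1, p_a, s_a, s_b)` is the case `h = 1`. Conjugating by `g_i(C_i)` with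
`g_{i+1}(X - 1) = g_i · h_i` therefore removes the factors `h_i` one block at a time. -/

open Matrix

section CompanionModel

variable {F : Type*} [Field F]

noncomputable def modCoeffs (G : F[X]) (N : ℕ) : F[X] →ₗ[F] Fin N → F where
  toFun x i := (x %ₘ G).coeff i
  map_add' x y := by ext i; simp [add_modByMonic]
  map_smul' c x := by ext i; simp [smul_modByMonic]

variable {G : F[X]} {N : ℕ}

@[simp]
lemma modCoeffs_apply (x : F[X]) (i : Fin N) : modCoeffs G N x i = (x %ₘ G).coeff i := rfl

lemma modCoeffs_eq_zero_iff (hG : G.Monic) (hN : G.natDegree = N) {x : F[X]} :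
    modCoeffs G N x = 0 ↔ G ∣ x := by
  rw [← modByMonic_eq_zero_iff_dvd hG]
  refine ⟨fun h => Polynomial.ext fun k => ?_, fun h => by ext i; simp [h]⟩
  rcases lt_or_ge k N with hk | hk
  · simpa using congrFun h ⟨k, hk⟩
  · refine coeff_eq_zero_of_degree_lt ((degree_modByMonic_lt x hG).trans_le ?_)
    rw [degree_eq_natDegree hG.ne_zero, hN]
    exact_mod_cast hk

lemma modCoeffs_mul_add (hG : G.Monic) (y z : F[X]) :
    modCoeffs G N (G * y + z) = modCoeffs G N z := by
  ext i
  simp [add_modByMonic, (modByMonic_eq_zero_iff_dvd hG).2 (dvd_mul_right G y)]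

lemma modCoeffs_X_pow (hG : G.Monic) (hN : G.natDegree = N) (j : Fin N) :
    modCoeffs G N (X ^ (j : ℕ)) = Pi.single j 1 := by
  have hdeg : degree (X ^ (j : ℕ) : F[X]) < degree G := by
    rw [degree_X_pow, degree_eq_natDegree hG.ne_zero, hN]
    exact_mod_cast j.isLt
  ext i
  rw [modCoeffs_apply, (modByMonic_eq_self_iff hG).2 hdeg, coeff_X_pow, Pi.single_apply]
  exact if_congr Fin.val_inj rfl rfl

lemma modCoeffs_surjective (hG : G.Monic) (hN : G.natDegree = N) :
    Function.Surjective (modCoeffs G N) := fun v =>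
  ⟨∑ j : Fin N, v j • X ^ (j : ℕ), by
    simp [map_sum, modCoeffs_X_pow hG hN, ← Pi.single_smul, Finset.univ_sum_single]⟩

lemma X_mul_modByMonic (hG : G.Monic) (hN : G.natDegree = N) (hN0 : 0 < N) (x : F[X]) :
    (X * x) %ₘ G = X * (x %ₘ G) - C ((x %ₘ G).coeff (N - 1)) * G := by
  set r := x %ₘ G
  set c := r.coeff (N - 1)
  have hr : r.natDegree < N := hN ▸ natDegree_modByMonic_lt x hG fun h => by simp [h] at hN; omega
  have hdeg : degree (X * r - C c * G) < degree G := by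
    rw [degree_eq_natDegree hG.ne_zero, hN, degree_lt_iff_coeff_zero]
    intro k hk
    obtain ⟨k, rfl⟩ : ∃ k', k = k' + 1 := Nat.exists_eq_succ_of_ne_zero (by omega)
    rw [coeff_sub, coeff_X_mul, coeff_C_mul]
    rcases eq_or_lt_of_le (show N ≤ k + 1 by exact_mod_cast hk) with hk | hk
    · rw [show k = N - 1 by omega, show N - 1 + 1 = G.natDegree by omega, hG.coeff_natDegree]
      ring
    · rw [coeff_eq_zero_of_natDegree_lt (by omega), coeff_eq_zero_of_natDegree_lt (by omega)]
      ring
  refine (div_modByMonic_unique (X * (x /ₘ G) + C c) _ hG ⟨?_, hdeg⟩).2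
  linear_combination X * modByMonic_add_div x G

lemma companionOf_mulVec_coeff (hN0 : 0 < N) (r : F[X]) :
    companionOf G N *ᵥ (fun j : Fin N => r.coeff j) =
      fun i => (X * r - C (r.coeff (N - 1)) * G).coeff i := by
  obtain ⟨N, rfl⟩ : ∃ N', N = N' + 1 := Nat.exists_eq_succ_of_ne_zero (by omega)
  ext i
  simp only [mulVec, dotProduct, Fin.sum_univ_castSucc, companionOf, Fin.val_castSucc,
    Fin.val_last, add_tsub_cancel_right, coeff_sub, coeff_C_mul, if_true]
  have hshift : ∑ j : Fin N, (if (j : ℕ) = N then -G.coeff i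
      else if (i : ℕ) = j + 1 then 1 else 0) * r.coeff j = (X * r).coeff i := by
    have hlt (j : Fin N) : (j : ℕ) ≠ N := j.isLt.ne
    simp only [hlt, if_false, ite_mul, one_mul, zero_mul]
    rcases i with ⟨_ | i, hi⟩
    · simp
    · rw [coeff_X_mul, Finset.sum_eq_single ⟨i, by omega⟩]
      · simp
      · intro j _ hj
        simp [Fin.ext_iff] at hj ⊢
        omega
      · simp
  rw [hshift]
  ring

lemma companionOf_mulVec_modCoeffs (hG : G.Monic) (hN : G.natDegree = N) (x : F[X]) :
    companionOf G N *ᵥ modCoeffs G N x = modCoeffs G N (X * x) := by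
  rcases Nat.eq_zero_or_pos N with rfl | hN0
  · exact Subsingleton.elim _ _
  · ext i
    rw [modCoeffs_apply, X_mul_modByMonic hG hN hN0,
      ← congrFun (companionOf_mulVec_coeff hN0 _) i]
    rfl

lemma aeval_companionOf_mulVec_modCoeffs (hG : G.Monic) (hN : G.natDegree = N) (f x : F[X]) :
    aeval (companionOf G N) f *ᵥ modCoeffs G N x = modCoeffs G N (f * x) := by
  induction f using Polynomial.induction_on with
  | C a => simp [Algebra.algebraMap_eq_smul_one, smul_mulVec, ← smul_eq_C_mul]
  | add f g hf hg => rw [map_add, add_mulVec, hf, hg, add_mul, map_add]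
  | monomial n a ih =>
    rw [show C a * X ^ (n + 1) = X * (C a * X ^ n) by ring, map_mul, aeval_X, ← mulVec_mulVec,
      ih, companionOf_mulVec_modCoeffs hG hN, mul_assoc X]

lemma aeval_companionOf_self (hG : G.Monic) (hN : G.natDegree = N) :
    aeval (companionOf G N) G = 0 := by
  refine ext_iff_mulVec.2 fun v => ?_
  obtain ⟨x, rfl⟩ := modCoeffs_surjective hG hN v
  rw [aeval_companionOf_mulVec_modCoeffs hG hN, zero_mulVec,
    modCoeffs_eq_zero_iff hG hN]
  exact dvd_mul_right G x

lemma isUnit_aeval_companionOf (hG : G.Monic) (hN : G.natDegree = N) {g : F[X]}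
    (hg : IsCoprime g G) : IsUnit (aeval (companionOf G N) g) := by
  obtain ⟨u, v, huv⟩ := hg
  have hinv : aeval (companionOf G N) u * aeval (companionOf G N) g = 1 := by
    simpa [aeval_companionOf_self hG hN] using congrArg (aeval (companionOf G N)) huv
  exact IsUnit.of_mul_eq_one_right _ hinv

end CompanionModel

lemma mul_aeval_eq_aeval_mul {R m n : Type*} [CommRing R] [Fintype m] [Fintype n]
    [DecidableEq m] [DecidableEq n] {L : Matrix m n R} {A : Matrix m m R} {B : Matrix n n R}
    (h : L * B = A * L) (f : R[X]) : L * aeval B f = aeval A f * L := by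
  induction f using Polynomial.induction_on with
  | C a => simp [Algebra.algebraMap_eq_smul_one]
  | add f g hf hg => rw [map_add, map_add, Matrix.mul_add, Matrix.add_mul, hf, hg]
  | monomial k a ih =>
    rw [pow_succ, ← mul_assoc, map_mul (aeval B), map_mul (aeval A), aeval_X, aeval_X,
      ← Matrix.mul_assoc, ih, Matrix.mul_assoc, h, Matrix.mul_assoc]

section Intertwiners

variable {F : Type*} [Field F]

lemma monic_natDegree_of_comp_X_add_C_eq_pow {p G : F[X]} {d r : ℕ} {γ : F} (hp : p.Monic)
    (hpd : p.natDegree = d) (hG : G.comp (X + C γ) = p ^ r) :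
    G.Monic ∧ G.natDegree = d * r := by
  have hG' : G = (p ^ r).comp (X - C γ) := by rw [← hG, comp_assoc]; simp
  refine ⟨hG' ▸ (hp.pow r).comp_X_sub_C γ, ?_⟩
  rw [hG', natDegree_comp, natDegree_X_sub_C, natDegree_pow, hpd, mul_one, mul_comm]

variable {Ga Gb : F[X]} {Na Nb : ℕ} {γ : F}

lemma exists_mulVec_modCoeffs_eq_of_intertwines (hGa : Ga.Monic) (hNa : Ga.natDegree = Na)
    (hGb : Gb.Monic) (hNb : Gb.natDegree = Nb) {L : Matrix (Fin Na) (Fin Nb) F}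
    (hL : L * (companionOf Gb Nb - γ • 1) = companionOf Ga Na * L) :
    ∃ w : F[X], ∀ x, L *ᵥ modCoeffs Gb Nb x = modCoeffs Ga Na (x.comp (X + C γ) * w) := by
  obtain ⟨w, hw⟩ := modCoeffs_surjective hGa hNa (L *ᵥ modCoeffs Gb Nb 1)
  have hL' : L * companionOf Gb Nb = (companionOf Ga Na + γ • 1) * L := by
    rw [Matrix.add_mul, ← hL, Matrix.mul_sub]
    simp
  refine ⟨w, fun x => ?_⟩
  calc L *ᵥ modCoeffs Gb Nb x = L *ᵥ (aeval (companionOf Gb Nb) x *ᵥ modCoeffs Gb Nb 1) := by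
        rw [aeval_companionOf_mulVec_modCoeffs hGb hNb, mul_one]
    _ = aeval (companionOf Ga Na) (x.comp (X + C γ)) *ᵥ modCoeffs Ga Na w := by
        rw [mulVec_mulVec, mul_aeval_eq_aeval_mul hL', ← mulVec_mulVec, hw, aeval_comp]
        simp [Algebra.algebraMap_eq_smul_one]
    _ = modCoeffs Ga Na (x.comp (X + C γ) * w) := aeval_companionOf_mulVec_modCoeffs hGa hNa _ _

end Intertwiners

section ShiftedIntertwiners

variable {F : Type*} [Field F] {p Gb : F[X]} {d n r : ℕ} {γ : F}

lemma exists_mulVec_modCoeffs_eq_of_injective (hp : p.Monic) (hpd : p.natDegree = d)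
    (hd : 0 < d) (hrn : r ≤ n) (hr : 1 ≤ r) (hGb : Gb.comp (X + C γ) = p ^ r)
    {L : Matrix (Fin (d * n)) (Fin (d * r)) F}
    (hL : L * (companionOf Gb (d * r) - γ • 1) = companionOf (p ^ n) (d * n) * L)
    (hinj : ∀ v, L *ᵥ v = 0 → v = 0) :
    ∃ h : F[X], ¬ p ∣ h ∧ ∀ x, L *ᵥ modCoeffs Gb (d * r) x =
      modCoeffs (p ^ n) (d * n) (x.comp (X + C γ) * (p ^ (n - r) * h)) := by
  obtain ⟨hGbm, hGbd⟩ := monic_natDegree_of_comp_X_add_C_eq_pow hp hpd hGb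
  have hpn : (p ^ n).natDegree = d * n := by rw [natDegree_pow, hpd, mul_comm]
  have hnr : p ^ n = p ^ r * p ^ (n - r) := by rw [← pow_add, Nat.add_sub_cancel' hrn]
  obtain ⟨w, hw⟩ := exists_mulVec_modCoeffs_eq_of_intertwines (hp.pow n) hpn hGbm hGbd hL
  obtain ⟨h, rfl⟩ : p ^ (n - r) ∣ w := by
    have hGb0 := hw Gb
    rw [(modCoeffs_eq_zero_iff hGbm hGbd).2 dvd_rfl, mulVec_zero, eq_comm,
      modCoeffs_eq_zero_iff (hp.pow n) hpn, hGb, hnr] at hGb0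
    exact (mul_dvd_mul_iff_left (pow_ne_zero r hp.ne_zero)).1 hGb0
  refine ⟨h, ?_, hw⟩
  rintro ⟨h', rfl⟩
  -- `(p^(r-1))(X - γ)` is nonzero modulo `Gb` but is killed by `L`.
  set x₀ := (p ^ (r - 1)).comp (X - C γ)
  have hx₀ : x₀.comp (X + C γ) = p ^ (r - 1) := by simp [x₀, comp_assoc]
  have hdvd : Gb ∣ x₀ := by
    rw [← modCoeffs_eq_zero_iff hGbm hGbd]
    refine hinj _ ?_
    rw [hw, hx₀, modCoeffs_eq_zero_iff (hp.pow n) hpn]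
    refine ⟨h', ?_⟩
    rw [hnr, ← Nat.sub_add_cancel hr, pow_succ, Nat.add_sub_cancel]
    ring
  have hle := natDegree_le_of_dvd hdvd ((hp.pow _).comp_X_sub_C γ).ne_zero
  rw [hGbd, natDegree_comp, natDegree_X_sub_C, natDegree_pow, hpd] at hle
  have : d * (r - 1) < d * r := Nat.mul_lt_mul_of_pos_left (by omega) hd
  rw [mul_comm] at this
  omega

lemma transpose_smat_apply (hp : p.Monic) (hpd : p.natDegree = d) (hrn : r ≤ n)
    (j : Fin (d * r)) : (Smat γ p d n r)ᵀ j =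
      modCoeffs (p ^ n) (d * n) ((X + C γ) ^ (j : ℕ) * p ^ (n - r)) := by
  have hdeg : d * r + d * (n - r) = d * n := by rw [← mul_add, Nat.add_sub_cancel' hrn]
  have hlt : degree ((X + C γ) ^ (j : ℕ) * p ^ (n - r)) < degree (p ^ n) := by
    refine degree_lt_degree ?_
    simp only [((monic_X_add_C γ).pow _).natDegree_mul (hp.pow _), natDegree_pow,
      natDegree_X_add_C, hpd, mul_one]
    linarith [j.isLt]
  ext i
  rw [modCoeffs_apply, (modByMonic_eq_self_iff (hp.pow n)).2 hlt]
  rfl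

lemma smat_mulVec_modCoeffs (hp : p.Monic) (hpd : p.natDegree = d) (hrn : r ≤ n)
    (hGb : Gb.comp (X + C γ) = p ^ r) (x : F[X]) :
    Smat γ p d n r *ᵥ modCoeffs Gb (d * r) x =
      modCoeffs (p ^ n) (d * n) (x.comp (X + C γ) * p ^ (n - r)) := by
  obtain ⟨hGbm, hGbd⟩ := monic_natDegree_of_comp_X_add_C_eq_pow hp hpd hGb
  set r' := x %ₘ Gb
  have hx : x.comp (X + C γ) * p ^ (n - r) =
      p ^ n * (x /ₘ Gb).comp (X + C γ) + r'.comp (X + C γ) * p ^ (n - r) := by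
    conv_lhs => rw [← modByMonic_add_div x Gb]
    rw [add_comp, mul_comp, hGb, ← Nat.add_sub_cancel' hrn, pow_add, Nat.add_sub_cancel_left]
    ring
  have hr' : r' = ∑ j : Fin (d * r), C (r'.coeff j) * X ^ (j : ℕ) := by
    rcases eq_or_ne Gb 1 with rfl | hGb1
    · simp [r']
    · rw [Fin.sum_univ_eq_sum_range (fun j => C (r'.coeff j) * X ^ j)]
      exact as_sum_range_C_mul_X_pow' _ (hGbd ▸ natDegree_modByMonic_lt x hGbm hGb1)
  rw [hx, modCoeffs_mul_add (hp.pow n), mulVec_eq_sum]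
  conv_rhs => rw [hr', comp_eq_aeval, map_sum, Finset.sum_mul, map_sum]
  refine Finset.sum_congr rfl fun j _ => ?_
  rw [transpose_smat_apply hp hpd hrn, op_smul_eq_smul, map_mul (aeval _), aeval_C, map_pow,
    aeval_X, algebraMap_eq, mul_assoc, ← smul_eq_C_mul, map_smul]
  rfl

lemma aeval_companionOf_mul_eq_smat_mul_aeval (hp : p.Monic) (hpd : p.natDegree = d)
    (hrn : r ≤ n) (hGb : Gb.comp (X + C γ) = p ^ r) {L : Matrix (Fin (d * n)) (Fin (d * r)) F}
    {h ga gb : F[X]} (hL : ∀ x, L *ᵥ modCoeffs Gb (d * r) x =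
      modCoeffs (p ^ n) (d * n) (x.comp (X + C γ) * (p ^ (n - r) * h)))
    (hg : gb.comp (X + C γ) = ga * h) :
    aeval (companionOf (p ^ n) (d * n)) ga * L =
      Smat γ p d n r * aeval (companionOf Gb (d * r)) gb := by
  obtain ⟨hGbm, hGbd⟩ := monic_natDegree_of_comp_X_add_C_eq_pow hp hpd hGb
  have hpn : (p ^ n).natDegree = d * n := by rw [natDegree_pow, hpd, mul_comm]
  refine ext_iff_mulVec.2 fun v => ?_
  obtain ⟨x, rfl⟩ := modCoeffs_surjective hGbm hGbd v
  rw [← mulVec_mulVec, ← mulVec_mulVec, hL, aeval_companionOf_mulVec_modCoeffs (hp.pow n) hpn,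
    aeval_companionOf_mulVec_modCoeffs hGbm hGbd, smat_mulVec_modCoeffs hp hpd hrn hGb,
    mul_comp, hg]
  congr 1
  ring

end ShiftedIntertwiners

section ShiftedPartialProd

variable {R : Type*} [CommRing R]

-- `shiftedPartialProd γ h n = ∏_{k < n} h k (X - (n - k) γ)`
noncomputable def shiftedPartialProd (γ : R) (h : ℕ → R[X]) : ℕ → R[X]
  | 0 => 1
  | n + 1 => (shiftedPartialProd γ h n * h n).comp (X - C γ)

variable {γ : R} {h : ℕ → R[X]}

lemma shiftedPartialProd_succ_comp (n : ℕ) :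
    (shiftedPartialProd γ h (n + 1)).comp (X + C γ) = shiftedPartialProd γ h n * h n := by
  simp [shiftedPartialProd, comp_assoc]

lemma isCoprime_shiftedPartialProd {p : ℕ → R[X]}
    (hp : ∀ n, (p (n + 1)).comp (X + C γ) = p n) (hh : ∀ n, IsCoprime (h n) (p n)) (n : ℕ) :
    IsCoprime (shiftedPartialProd γ h n) (p n) := by
  induction n with
  | zero => exact isCoprime_one_left
  | succ n ih =>
    have hshift : (p n).comp (X - C γ) = p (n + 1) := by rw [← hp n, comp_assoc]; simp
    rw [shiftedPartialProd, ← hshift, comp_eq_aeval, comp_eq_aeval]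
    exact (ih.mul_left (hh n)).map (aeval (R := R) (X - C γ)).toRingHom

end ShiftedPartialProd

section BlockMatrices

variable {F : Type*} [Field F] {m : ℕ}

lemma blockDiagS_eq_blockDiagonal' {k : Fin m → ℕ}
    (M : (i : Fin m) → Matrix (Fin (k i)) (Fin (k i)) F) : blockDiagS M = blockDiagonal' M := by
  ext ⟨i, x⟩ ⟨j, y⟩
  by_cases hij : i = j
  · subst hij
    simp [blockDiagS]
  · simp [blockDiagS, blockDiagonal'_apply_ne _ _ _ hij, hij]

variable {d : ℕ} {ss : Fin m → ℕ}

lemma blockDiagonal'_mul_calTgen (M : (i : Fin m) → Matrix (Fin (d * ss i)) (Fin (d * ss i)) F)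
    (L : (i j : Fin m) → (i : ℕ) + 1 = j → Matrix (Fin (d * ss i)) (Fin (d * ss j)) F) :
    blockDiagonal' M * calTgen d ss L = calTgen d ss fun i j h => M i * L i j h := by
  ext ⟨i, x⟩ ⟨j, y⟩
  rw [mul_apply, Fintype.sum_sigma, Finset.sum_eq_single i]
  · by_cases hij : (i : ℕ) + 1 = j <;> simp [calTgen, hij, mul_apply]
  · intro k _ hk
    simp [blockDiagonal'_apply_ne _ _ _ (Ne.symm hk)]
  · simp

lemma calTgen_mul_blockDiagonal' (M : (i : Fin m) → Matrix (Fin (d * ss i)) (Fin (d * ss i)) F)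
    (L : (i j : Fin m) → (i : ℕ) + 1 = j → Matrix (Fin (d * ss i)) (Fin (d * ss j)) F) :
    calTgen d ss L * blockDiagonal' M = calTgen d ss fun i j h => L i j h * M j := by
  ext ⟨i, x⟩ ⟨j, y⟩
  rw [mul_apply, Fintype.sum_sigma, Finset.sum_eq_single j]
  · by_cases hij : (i : ℕ) + 1 = j <;> simp [calTgen, hij, mul_apply]
  · intro k _ hk
    simp [blockDiagonal'_apply_ne _ _ _ hk]
  · simp

lemma blockDiagonal'_mul_calTgen_eq {M : (i : Fin m) → Matrix (Fin (d * ss i)) (Fin (d * ss i)) F}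
    {L L' : (i j : Fin m) → (i : ℕ) + 1 = j → Matrix (Fin (d * ss i)) (Fin (d * ss j)) F}
    (h : ∀ i j hij, M i * L i j hij = L' i j hij * M j) :
    blockDiagonal' M * calTgen d ss L = calTgen d ss L' * blockDiagonal' M := by
  rw [blockDiagonal'_mul_calTgen, calTgen_mul_blockDiagonal']
  congr 1
  funext i j hij
  exact h i j hij

end BlockMatrices

section ShiftedPolynomials

variable {F : Type*} [Field F] {q : F[X]}

lemma monic_pShift (hq : q.Monic) (i : ℕ) : (pShift q i).Monic := hq.comp_X_add_C _

lemma natDegree_pShift (i : ℕ) : (pShift q i).natDegree = q.natDegree := by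
  rw [pShift, natDegree_comp, natDegree_X_add_C, mul_one]

lemma irreducible_pShift (hq : Irreducible q) (i : ℕ) : Irreducible (pShift q i) := by
  simpa [pShift, comp_eq_aeval] using (MulEquiv.irreducible_iff (algEquivAevalXAddC (i : F))).2 hq

lemma pShift_succ_comp (i : ℕ) : (pShift q (i + 1)).comp (X + C (-1)) = pShift q i := by
  rw [pShift, pShift, comp_assoc, add_comp, X_comp, C_comp, add_assoc, ← C_add]
  push_cast
  ring_nf

lemma calT_eq_calTgen {m : ℕ} (d : ℕ) (ss : Fin m → ℕ) :
    calT q d ss = calTgen d ss fun i j _ => Smat (-1) (pShift q i) d (ss i) (ss j) := by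
  ext a b
  simp [calT, calTgen, dite_eq_ite]

end ShiftedPolynomials

lemma exists_isCoprime_superdiagonal_factors {F : Type*} [Field F] {q : F[X]} {d m : ℕ}
    {ss : Fin m → ℕ} (hq : q.Monic) (hirr : Irreducible q) (hdeg : q.natDegree = d)
    (hd : 1 ≤ d) (hdec : ∀ i j : Fin m, i ≤ j → ss j ≤ ss i) (hss : ∀ i, 1 ≤ ss i)
    {Lmat : (i j : Fin m) → (i : ℕ) + 1 = j → Matrix (Fin (d * ss i)) (Fin (d * ss j)) F}
    (hinj : ∀ i j h, ∀ v, Lmat i j h *ᵥ v = 0 → v = 0)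
    (hrel : ∀ i j h, Lmat i j h * (companionOf (pShift q j ^ ss j) (d * ss j) + 1) =
      companionOf (pShift q i ^ ss i) (d * ss i) * Lmat i j h) :
    ∃ h : ℕ → F[X], (∀ a, IsCoprime (h a) (pShift q a)) ∧ ∀ i j hij x,
      Lmat i j hij *ᵥ modCoeffs (pShift q j ^ ss j) (d * ss j) x =
        modCoeffs (pShift q i ^ ss i) (d * ss i)
          (x.comp (X + C (-1)) * (pShift q i ^ (ss i - ss j) * h i)) := by
  -- Indexing the blocks by `a : ℕ` lets `choose` return a sequence; past the last block `h = 1`.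
  have hblock (a : ℕ) : ∃ h : F[X], IsCoprime h (pShift q a) ∧
      ∀ (i j : Fin m) (hij : (i : ℕ) + 1 = j), (i : ℕ) = a → ∀ x,
        Lmat i j hij *ᵥ modCoeffs (pShift q j ^ ss j) (d * ss j) x =
          modCoeffs (pShift q i ^ ss i) (d * ss i)
            (x.comp (X + C (-1)) * (pShift q i ^ (ss i - ss j) * h)) := by
    by_cases ha : a + 1 < m
    · obtain ⟨h, hndvd, hL⟩ := exists_mulVec_modCoeffs_eq_of_injective (monic_pShift hq a)
        ((natDegree_pShift a).trans hdeg) hd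
        (hdec ⟨a, by omega⟩ ⟨a + 1, ha⟩ (Fin.mk_le_mk.2 a.le_succ)) (hss _)
        (by rw [pow_comp, pShift_succ_comp])
        (by simpa using hrel ⟨a, by omega⟩ ⟨a + 1, ha⟩ rfl)
        (hinj _ _ rfl)
      refine ⟨h, ((irreducible_pShift hirr a).coprime_iff_not_dvd.2 hndvd).symm, ?_⟩
      rintro i j hij rfl
      obtain rfl : j = ⟨i + 1, ha⟩ := Fin.ext hij.symm
      exact hL
    · exact ⟨1, isCoprime_one_left, fun i j hij hi => absurd (hi ▸ hij ▸ j.isLt) ha⟩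
  choose h hcop hL using hblock
  exact ⟨h, hcop, fun i j hij => hL i i j hij rfl⟩

theorem normalize_superdiagonal_blocks_general
    {F : Type*} [Field F] (q : Polynomial F) (d m : ℕ) (ss : Fin m → ℕ)
    (hq : q.Monic) (hirr : Irreducible q) (hdeg : q.natDegree = d) (hd : 1 ≤ d)
    (hdec : ∀ i j : Fin m, i ≤ j → ss j ≤ ss i) (hss : ∀ i, 1 ≤ ss i)
    (Lmat : (i j : Fin m) → (i : ℕ) + 1 = (j : ℕ) →
      Matrix (Fin (d * ss i)) (Fin (d * ss j)) F)
    (hinj : ∀ (i j : Fin m) (h : (i : ℕ) + 1 = (j : ℕ)),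
      ∀ vec : Fin (d * ss j) → F, (Lmat i j h).mulVec vec = 0 → vec = 0)
    (hrel : ∀ (i j : Fin m) (h : (i : ℕ) + 1 = (j : ℕ)),
      Lmat i j h * (companionOf ((pShift q j) ^ (ss j)) (d * ss j) + 1) =
        companionOf ((pShift q i) ^ (ss i)) (d * ss i) * Lmat i j h) :
    ∃ g : Fin m → Polynomial F,
      (∀ i : Fin m, IsCoprime (g i) (pShift q i)) ∧
      (let P := blockDiagS fun i =>
          Polynomial.aeval (companionOf ((pShift q i) ^ (ss i)) (d * ss i)) (g i);
        IsUnit P ∧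
        P * calTgen d ss Lmat * P⁻¹ = calT q d ss ∧
        P * calA q d ss = calA q d ss * P) := by
  obtain ⟨h, hcop, hL⟩ :=
    exists_isCoprime_superdiagonal_factors hq hirr hdeg hd hdec hss hinj hrel
  have hg (i : ℕ) := isCoprime_shiftedPartialProd pShift_succ_comp hcop i
  set g : Fin m → F[X] := fun i => shiftedPartialProd (-1) h i
  set P := blockDiagonal' fun i : Fin m => aeval (companionOf (pShift q i ^ ss i) (d * ss i)) (g i)
  have hPunit : IsUnit P := (Pi.isUnit_iff.2 fun i : Fin m => isUnit_aeval_companionOf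
    ((monic_pShift hq i).pow _) (by rw [natDegree_pow, natDegree_pShift, hdeg, mul_comm])
      (hg i).pow_right).map (blockDiagonal'RingHom (fun i : Fin m => Fin (d * ss i)) F)
  have hPT : P * calTgen d ss Lmat = calT q d ss * P := by
    rw [calT_eq_calTgen]
    refine blockDiagonal'_mul_calTgen_eq fun i j hij => ?_
    refine aeval_companionOf_mul_eq_smat_mul_aeval (monic_pShift hq i)
      ((natDegree_pShift i).trans hdeg) (hdec i j (by rw [Fin.le_def]; omega))
      (by rw [pow_comp, ← hij, pShift_succ_comp]) (hL i j hij) ?_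
    simp only [g, ← hij]
    exact shiftedPartialProd_succ_comp _
  refine ⟨g, fun i => hg i, ?_⟩
  simp only [blockDiagS_eq_blockDiagonal', calA]
  refine ⟨hPunit, ?_, ?_⟩
  · rw [hPT, mul_nonsing_inv_cancel_right _ _ ((isUnit_iff_isUnit_det _).1 hPunit)]
  · rw [← blockDiagonal'_mul, ← blockDiagonal'_mul]
    congr 1
    funext i
    simpa using ((Commute.all (g i) X).map (aeval _)).eq

/-- Let `p₁,…,p_m` be pairwise distinct monic irreducible polynomials
of degree `d` with `p_i(X) = p₁(X+i−1)` and `s₁ ≥ ⋯ ≥ s_m ≥ 1`.  If `𝒯'` is a block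
matrix whose only nonzero blocks are injective matrices `L_i` in the positions `(i−1,i)`
satisfying `L_i(C_i + I) = C_{i−1}L_i`, then there is an invertible block diagonal
matrix `P` with blocks `g_i(C_i)`, `gcd(g_i, p_i) = 1`, such that `P 𝒯' P⁻¹ = 𝒯` and `P`
commutes with the block diagonal matrix `𝒜` of the companion matrices `C_i`. -/
theorem normalize_superdiagonal_blocks
    {F : Type*} [Field F] (q : Polynomial F) (d m : ℕ) (ss : Fin m → ℕ)
    (hq : q.Monic) (hirr : Irreducible q) (hdeg : q.natDegree = d) (hd : 1 ≤ d)
    (hm : 1 < m)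
    (hdistinct : ∀ i j : Fin m, i ≠ j → pShift q i ≠ pShift q j)
    (hdec : ∀ i j : Fin m, i ≤ j → ss j ≤ ss i) (hss : ∀ i, 1 ≤ ss i)
    (Lmat : (i j : Fin m) → (i : ℕ) + 1 = (j : ℕ) →
      Matrix (Fin (d * ss i)) (Fin (d * ss j)) F)
    (hinj : ∀ (i j : Fin m) (h : (i : ℕ) + 1 = (j : ℕ)),
      ∀ vec : Fin (d * ss j) → F, (Lmat i j h).mulVec vec = 0 → vec = 0)
    (hrel : ∀ (i j : Fin m) (h : (i : ℕ) + 1 = (j : ℕ)),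
      Lmat i j h * (companionOf ((pShift q j) ^ (ss j)) (d * ss j) + 1) =
        companionOf ((pShift q i) ^ (ss i)) (d * ss i) * Lmat i j h) :
    ∃ g : Fin m → Polynomial F,
      (∀ i : Fin m, IsCoprime (g i) (pShift q i)) ∧
      (let P := blockDiagS fun i =>
          Polynomial.aeval (companionOf ((pShift q i) ^ (ss i)) (d * ss i)) (g i);
        IsUnit P ∧
        P * calTgen d ss Lmat * P⁻¹ = calT q d ss ∧
        P * calA q d ss = calA q d ss * P) :=
  normalize_superdiagonal_blocks_general q d m ss hq hirr hdeg hd hdec hss Lmat hinj hrel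
end
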